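/- arXiv:1512.06649 — 7 statements merged into one kernel-verified Lean document; each statement's English description precedes it below -/
import Mathlib

section
/- In a weighted grid graph whose vertex (i,j) carries coordinates (x i, y j) for strictly increasing real sequences x and y, and whose edges join grid-adjacent vertices with weight equal to the l1 distance between their coordinates, the minimum total weight of a walk between two vertices p = (i,j) and q = (i',j') exists and equals |x i - x i'| + |y j - y j'|. That is, every walk from p to q has total weight at least |x i - x i'| + |y j - y j'|, and some walk from p to q attains this weight. -/
/-- The grid graph on `Fin v × Fin h`: `(i,j)` and `(i',j')` are adjacent iff
`i = i'` and `j, j'` are consecutive, or `j = j'` and `i, i'` are consecutive. -/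
def gridGraph (v h : ℕ) : SimpleGraph (Fin v × Fin h) :=
  SimpleGraph.fromRel fun p q =>
    (p.1 = q.1 ∧ (p.2 : ℕ) + 1 = (q.2 : ℕ)) ∨ (p.2 = q.2 ∧ (p.1 : ℕ) + 1 = (q.1 : ℕ))

/-- The total weight of a walk in the grid graph, where the vertex `(i,j)` carries the
coordinates `(x i, y j)` and each edge is weighted by the `l1` distance of its endpoints. -/
noncomputable def gridWalkWeight {v h : ℕ} (x : Fin v → ℝ) (y : Fin h → ℝ)
    {p q : Fin v × Fin h} (W : (gridGraph v h).Walk p q) : ℝ :=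
  (W.darts.map fun d => |x d.toProd.1.1 - x d.toProd.2.1| + |y d.toProd.1.2 - y d.toProd.2.2|).sum

lemma gww_cons {v h : ℕ} (x : Fin v → ℝ) (y : Fin h → ℝ)
    {a b c : Fin v × Fin h} (hab : (gridGraph v h).Adj a b)
    (W : (gridGraph v h).Walk b c) :
    gridWalkWeight x y (SimpleGraph.Walk.cons hab W)
      = (|x a.1 - x b.1| + |y a.2 - y b.2|) + gridWalkWeight x y W := by
  simp [gridWalkWeight]

lemma gww_nil {v h : ℕ} (x : Fin v → ℝ) (y : Fin h → ℝ) (a : Fin v × Fin h) :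
    gridWalkWeight x y (SimpleGraph.Walk.nil (u := a)) = 0 := by
  simp [gridWalkWeight]

lemma gww_append {v h : ℕ} (x : Fin v → ℝ) (y : Fin h → ℝ)
    {a b c : Fin v × Fin h} (W₁ : (gridGraph v h).Walk a b) (W₂ : (gridGraph v h).Walk b c) :
    gridWalkWeight x y (W₁.append W₂) = gridWalkWeight x y W₁ + gridWalkWeight x y W₂ := by
  simp [gridWalkWeight]

lemma vert_walk {v h : ℕ} (x : Fin v → ℝ) (y : Fin h → ℝ) (hx : StrictMono x) :
    ∀ (n : ℕ) (i i' : Fin v) (j : Fin h), ((i : ℕ) + n = (i' : ℕ) ∨ (i' : ℕ) + n = (i : ℕ)) →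
      ∃ W : (gridGraph v h).Walk (i, j) (i', j), gridWalkWeight x y W = |x i - x i'| := by
  intro n
  induction n with
  | zero =>
    intro i i' j hn
    have : i = i' := by
      rcases hn with hn | hn <;> exact Fin.ext (by omega)
    subst this
    exact ⟨SimpleGraph.Walk.nil, by simp [gww_nil]⟩
  | succ n ih =>
    intro i i' j hn
    rcases hn with hn | hn
    · have hlt : (i : ℕ) + 1 < v := by omega
      set i₁ : Fin v := ⟨(i : ℕ) + 1, hlt⟩ with hi₁
      have hadj : (gridGraph v h).Adj (i, j) (i₁, j) := by
        refine ⟨fun hcon => ?_, Or.inl (Or.inr ⟨rfl, rfl⟩)⟩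
        have := congrArg (fun z => ((Prod.fst z : Fin v) : ℕ)) hcon
        simp only [i₁] at this
        omega
      obtain ⟨W, hW⟩ := ih i₁ i' j (Or.inl (by simp [i₁]; omega))
      refine ⟨SimpleGraph.Walk.cons hadj W, ?_⟩
      rw [gww_cons, hW]
      have h1 : x i < x i₁ := hx (by simp [Fin.lt_def, i₁])
      have h2 : x i₁ ≤ x i' := hx.monotone (by simp [Fin.le_def, i₁]; omega)
      have h3 : x i < x i' := lt_of_lt_of_le h1 h2
      rw [abs_of_nonpos (show x i - x i₁ ≤ 0 by linarith),
        abs_of_nonpos (show x i₁ - x i' ≤ 0 by linarith),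
        abs_of_nonpos (show x i - x i' ≤ 0 by linarith)]
      simp
    · have hlt : (i' : ℕ) + n < v := i.isLt.trans_le' (by omega)
      set i₁ : Fin v := ⟨(i' : ℕ) + n, hlt⟩ with hi₁
      have hadj : (gridGraph v h).Adj (i, j) (i₁, j) := by
        refine ⟨fun hcon => ?_, Or.inr (Or.inr ⟨rfl, by simp [i₁]; omega⟩)⟩
        have := congrArg (fun z => ((Prod.fst z : Fin v) : ℕ)) hcon
        simp only [i₁] at this
        omega
      obtain ⟨W, hW⟩ := ih i₁ i' j (Or.inr (by simp [i₁]))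
      refine ⟨SimpleGraph.Walk.cons hadj W, ?_⟩
      rw [gww_cons, hW]
      have h1 : x i₁ < x i := hx (by simp [Fin.lt_def, i₁]; omega)
      have h2 : x i' ≤ x i₁ := hx.monotone (by simp [Fin.le_def, i₁])
      have h3 : x i' < x i := lt_of_le_of_lt h2 h1
      rw [abs_of_nonneg (show (0:ℝ) ≤ x i - x i₁ by linarith),
        abs_of_nonneg (show (0:ℝ) ≤ x i₁ - x i' by linarith),
        abs_of_nonneg (show (0:ℝ) ≤ x i - x i' by linarith)]
      simp

lemma horiz_walk {v h : ℕ} (x : Fin v → ℝ) (y : Fin h → ℝ) (hy : StrictMono y) :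
    ∀ (n : ℕ) (j j' : Fin h) (i : Fin v), ((j : ℕ) + n = (j' : ℕ) ∨ (j' : ℕ) + n = (j : ℕ)) →
      ∃ W : (gridGraph v h).Walk (i, j) (i, j'), gridWalkWeight x y W = |y j - y j'| := by
  intro n
  induction n with
  | zero =>
    intro j j' i hn
    have : j = j' := by
      rcases hn with hn | hn <;> exact Fin.ext (by omega)
    subst this
    exact ⟨SimpleGraph.Walk.nil, by simp [gww_nil]⟩
  | succ n ih =>
    intro j j' i hn
    rcases hn with hn | hn
    · have hlt : (j : ℕ) + 1 < h := by omega
      set j₁ : Fin h := ⟨(j : ℕ) + 1, hlt⟩ with hj₁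
      have hadj : (gridGraph v h).Adj (i, j) (i, j₁) := by
        refine ⟨fun hcon => ?_, Or.inl (Or.inl ⟨rfl, rfl⟩)⟩
        have := congrArg (fun z => ((Prod.snd z : Fin h) : ℕ)) hcon
        simp only [j₁] at this
        omega
      obtain ⟨W, hW⟩ := ih j₁ j' i (Or.inl (by simp [j₁]; omega))
      refine ⟨SimpleGraph.Walk.cons hadj W, ?_⟩
      rw [gww_cons, hW]
      have h1 : y j < y j₁ := hy (by simp [Fin.lt_def, j₁])
      have h2 : y j₁ ≤ y j' := hy.monotone (by simp [Fin.le_def, j₁]; omega)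
      have h3 : y j < y j' := lt_of_lt_of_le h1 h2
      rw [abs_of_nonpos (show y j - y j₁ ≤ 0 by linarith),
        abs_of_nonpos (show y j₁ - y j' ≤ 0 by linarith),
        abs_of_nonpos (show y j - y j' ≤ 0 by linarith)]
      simp
    · have hlt : (j' : ℕ) + n < h := j.isLt.trans_le' (by omega)
      set j₁ : Fin h := ⟨(j' : ℕ) + n, hlt⟩ with hj₁
      have hadj : (gridGraph v h).Adj (i, j) (i, j₁) := by
        refine ⟨fun hcon => ?_, Or.inr (Or.inl ⟨rfl, by simp [j₁]; omega⟩)⟩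
        have := congrArg (fun z => ((Prod.snd z : Fin h) : ℕ)) hcon
        simp only [j₁] at this
        omega
      obtain ⟨W, hW⟩ := ih j₁ j' i (Or.inr (by simp [j₁]))
      refine ⟨SimpleGraph.Walk.cons hadj W, ?_⟩
      rw [gww_cons, hW]
      have h1 : y j₁ < y j := hy (by simp [Fin.lt_def, j₁]; omega)
      have h2 : y j' ≤ y j₁ := hy.monotone (by simp [Fin.le_def, j₁])
      have h3 : y j' < y j := lt_of_le_of_lt h2 h1
      rw [abs_of_nonneg (show (0:ℝ) ≤ y j - y j₁ by linarith),
        abs_of_nonneg (show (0:ℝ) ≤ y j₁ - y j' by linarith),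
        abs_of_nonneg (show (0:ℝ) ≤ y j - y j' by linarith)]
      simp

/-- In the weighted grid graph (the Hanan grid) with strictly increasing coordinate
sequences `x` and `y`, the minimum total weight of a walk between `p = (i,j)` and
`q = (i',j')` exists and equals `|x i - x i'| + |y j - y j'|`. -/
theorem grid_walk_min_weight (v h : ℕ) (hv : 1 ≤ v) (hh : 1 ≤ h)
    (x : Fin v → ℝ) (y : Fin h → ℝ) (hx : StrictMono x) (hy : StrictMono y)
    (p q : Fin v × Fin h) :
    (∀ W : (gridGraph v h).Walk p q,
        |x p.1 - x q.1| + |y p.2 - y q.2| ≤ gridWalkWeight x y W) ∧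
      ∃ W : (gridGraph v h).Walk p q,
        gridWalkWeight x y W = |x p.1 - x q.1| + |y p.2 - y q.2| := by
  constructor
  · intro W
    induction W with
    | nil => simp [gww_nil]
    | @cons a b c hab W ih =>
      rw [gww_cons]
      have h1 : |x a.1 - x c.1| ≤ |x a.1 - x b.1| + |x b.1 - x c.1| := abs_sub_le _ _ _
      have h2 : |y a.2 - y c.2| ≤ |y a.2 - y b.2| + |y b.2 - y c.2| := abs_sub_le _ _ _
      linarith
  · obtain ⟨W₁, hW₁⟩ := vert_walk x y hx
      (max ((p.1 : ℕ) - (q.1 : ℕ)) ((q.1 : ℕ) - (p.1 : ℕ))) p.1 q.1 p.2 (by omega)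
    obtain ⟨W₂, hW₂⟩ := horiz_walk x y hy
      (max ((p.2 : ℕ) - (q.2 : ℕ)) ((q.2 : ℕ) - (p.2 : ℕ))) p.2 q.2 q.1 (by omega)
    exact ⟨W₁.append W₂, by rw [gww_append, hW₁, hW₂]⟩
end

section
/- Let G be the unit grid graph on ℤ × ℤ. Fix an integer j and integers a < b < c < d. Suppose W₁ is a walk in G from (j,a) to (j,c) all of whose vertices have first coordinate at most j, and W₂ is a walk in G from (j,b) to (j,d) all of whose vertices have first coordinate at most j. Then W₁ and W₂ have a common vertex. -/
/-!
Close `W₁` into a loop `C` by a detour through the column `x = j + 1`. For a closed walk `C`,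
the parity of the number of edges of `C` crossed by the rightward horizontal ray from the centre of
a unit square does not change when we pass to an adjacent square, unless the side between the two
squares lies on `C`. Index squares by their lower-left corners: the side between two adjacent
squares `p`, `q` then contains whichever of `p`, `q` is the upper or right one, so a walk `W₂`
avoiding `C` keeps the parity constant along its vertices. But from `(j, b)` the ray meets `C` once,
on the detour, while from `(j, d)` it meets `C` nowhere.
-/

/-- The unit grid graph on `ℤ × ℤ`: two points are adjacent iff their `l1` distance is `1`. -/
def unitGrid : SimpleGraph (ℤ × ℤ) where
  Adj p q := |p.1 - q.1| + |p.2 - q.2| = 1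
  symm := by
    constructor
    intro p q hpq
    rw [abs_sub_comm q.1 p.1, abs_sub_comm q.2 p.2]
    exact hpq
  loopless := by
    constructor
    intro p hp
    simp at hp

open SimpleGraph

theorem unitGrid_adj_iff {u v : ℤ × ℤ} :
    unitGrid.Adj u v ↔ (u.1 = v.1 ∧ (u.2 = v.2 + 1 ∨ v.2 = u.2 + 1)) ∨
      (u.2 = v.2 ∧ (u.1 = v.1 + 1 ∨ v.1 = u.1 + 1)) := by
  change |u.1 - v.1| + |u.2 - v.2| = 1 ↔ _
  rcases abs_cases (u.1 - v.1) with ⟨h₁, _⟩ | ⟨h₁, _⟩ <;>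
    rcases abs_cases (u.2 - v.2) with ⟨h₂, _⟩ | ⟨h₂, _⟩ <;> omega

theorem SimpleGraph.Walk.sum_map_darts_fst_add_snd {V : Type*} {G : SimpleGraph V}
    (f : V → ZMod 2) {u v : V} (W : G.Walk u v) :
    (W.darts.map fun d => f d.fst + f d.snd).sum = f u + f v := by
  induction W with
  | nil => exact (CharTwo.add_self_eq_zero _).symm
  | cons _ _ ih =>
    rw [Walk.darts_cons, List.map_cons, List.sum_cons, ih, add_assoc, CharTwo.add_cancel_left]

/-- The edge `uv` crosses the rightward ray from `(p.1 + 1/2, p.2 + 1/2)`, the centre of the unit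
square with lower-left corner `p`. -/
def crossesRay (p u v : ℤ × ℤ) : ZMod 2 :=
  if p.1 < u.1 ∧ p.1 < v.1 ∧ ((u.2 = p.2 ∧ v.2 = p.2 + 1) ∨ (v.2 = p.2 ∧ u.2 = p.2 + 1)) then 1
  else 0

def rayParity {u v : ℤ × ℤ} (W : unitGrid.Walk u v) (p : ℤ × ℤ) : ZMod 2 :=
  (W.darts.map fun d => crossesRay p d.fst d.snd).sum

theorem rayParity_cons {u v w : ℤ × ℤ} (h : unitGrid.Adj u v) (W : unitGrid.Walk v w)
    (p : ℤ × ℤ) : rayParity (.cons h W) p = crossesRay p u v + rayParity W p := by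
  simp only [rayParity, Walk.darts_cons, List.map_cons, List.sum_cons]

theorem rayParity_append {u v w : ℤ × ℤ} (W : unitGrid.Walk u v) (W' : unitGrid.Walk v w)
    (p : ℤ × ℤ) : rayParity (W.append W') p = rayParity W p + rayParity W' p := by
  simp only [rayParity, Walk.darts_append, List.map_append, List.sum_append]

theorem rayParity_eq_zero_of_forall_fst_le {u v : ℤ × ℤ} (W : unitGrid.Walk u v) (p : ℤ × ℤ)
    (h : ∀ q ∈ W.support, q.1 ≤ p.1) : rayParity W p = 0 := by
  refine List.sum_eq_zero fun _ hx => ?_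
  obtain ⟨d, hd, rfl⟩ := List.mem_map.mp hx
  have := h d.fst (W.dart_fst_mem_support_of_mem_darts hd)
  exact if_neg fun ⟨hlt, _⟩ => by omega

theorem crossesRay_right {x y : ℤ} {u v : ℤ × ℤ} (h : unitGrid.Adj u v)
    (hu : u ≠ (x + 1, y)) (hv : v ≠ (x + 1, y)) :
    crossesRay (x, y) u v = crossesRay (x + 1, y) u v := by
  obtain ⟨u₁, u₂⟩ := u
  obtain ⟨v₁, v₂⟩ := v
  rw [unitGrid_adj_iff] at h
  simp only [crossesRay, ne_eq, Prod.mk.injEq] at *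
  split_ifs <;> first | rfl | omega

theorem crossesRay_add_crossesRay_up {x y : ℤ} {u v : ℤ × ℤ} (h : unitGrid.Adj u v)
    (hu : u ≠ (x, y + 1)) (hv : v ≠ (x, y + 1)) :
    crossesRay (x, y) u v + crossesRay (x, y + 1) u v =
      (if u.2 = y + 1 ∧ x < u.1 then 1 else 0) + (if v.2 = y + 1 ∧ x < v.1 then 1 else 0) := by
  obtain ⟨u₁, u₂⟩ := u
  obtain ⟨v₁, v₂⟩ := v
  rw [unitGrid_adj_iff] at h
  simp only [crossesRay, ne_eq, Prod.mk.injEq] at *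
  split_ifs <;> first | decide | omega

theorem rayParity_right {u v : ℤ × ℤ} (W : unitGrid.Walk u v) {x y : ℤ}
    (h : (x + 1, y) ∉ W.support) : rayParity W (x, y) = rayParity W (x + 1, y) := by
  refine congrArg List.sum (List.map_congr_left fun d hd => crossesRay_right d.adj ?_ ?_)
  · exact ne_of_mem_of_not_mem (W.dart_fst_mem_support_of_mem_darts hd) h
  · exact ne_of_mem_of_not_mem (W.dart_snd_mem_support_of_mem_darts hd) h

theorem rayParity_up {r : ℤ × ℤ} (C : unitGrid.Walk r r) {x y : ℤ}
    (h : (x, y + 1) ∉ C.support) : rayParity C (x, y) = rayParity C (x, y + 1) := by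
  -- the change of the crossings of each edge is a coboundary, so it sums to zero around `C`
  let g : ℤ × ℤ → ZMod 2 := fun w => if w.2 = y + 1 ∧ x < w.1 then 1 else 0
  have hsum : rayParity C (x, y) + rayParity C (x, y + 1) = g r + g r := by
    rw [rayParity, rayParity, ← List.sum_map_add, ← C.sum_map_darts_fst_add_snd g]
    refine congrArg List.sum (List.map_congr_left fun d hd =>
      crossesRay_add_crossesRay_up d.adj ?_ ?_)
    · exact ne_of_mem_of_not_mem (C.dart_fst_mem_support_of_mem_darts hd) h
    · exact ne_of_mem_of_not_mem (C.dart_snd_mem_support_of_mem_darts hd) h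
  rwa [CharTwo.add_self_eq_zero, CharTwo.add_eq_zero] at hsum

theorem rayParity_eq_of_adj {r p q : ℤ × ℤ} (C : unitGrid.Walk r r) (h : unitGrid.Adj p q)
    (hp : p ∉ C.support) (hq : q ∉ C.support) : rayParity C p = rayParity C q := by
  obtain ⟨x, y⟩ := p
  obtain ⟨x', y'⟩ := q
  have hcases := unitGrid_adj_iff.mp h
  dsimp only at hcases
  rcases hcases with ⟨rfl, rfl | rfl⟩ | ⟨rfl, rfl | rfl⟩
  · exact (rayParity_up C hp).symm
  · exact rayParity_up C hq
  · exact (rayParity_right C hp).symm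
  · exact rayParity_right C hq

theorem rayParity_eq_of_forall_notMem {r s t : ℤ × ℤ} (C : unitGrid.Walk r r)
    (W : unitGrid.Walk s t) (h : ∀ p ∈ W.support, p ∉ C.support) :
    rayParity C s = rayParity C t := by
  induction W with
  | nil => rfl
  | cons hadj W ih =>
    rw [Walk.support_cons] at h
    exact (rayParity_eq_of_adj C hadj (h _ List.mem_cons_self) (h _ (List.mem_cons_of_mem _
      W.start_mem_support))).trans (ih fun p hp => h p (List.mem_cons_of_mem _ hp))

theorem exists_walk_down_right_column (x a c : ℤ) (hac : a ≤ c) :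
    ∃ P : unitGrid.Walk (x + 1, c) (x, a), (∀ p ∈ P.support, p = (x, a) ∨ p.1 = x + 1) ∧
      ∀ y, rayParity P (x, y) = if a ≤ y ∧ y < c then 1 else 0 := by
  induction c, hac using Int.leInduction with
  | base =>
    refine ⟨.cons (unitGrid_adj_iff.mpr (by simp)) .nil, by simp, fun y => ?_⟩
    simp [rayParity, crossesRay]
  | succ c _ ih =>
    obtain ⟨P, hsupp, hpar⟩ := ih
    have hdown : unitGrid.Adj (x + 1, c + 1) (x + 1, c) := unitGrid_adj_iff.mpr (by simp)
    refine ⟨.cons hdown P, ?_, fun y => ?_⟩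
    · intro p hp
      rcases List.mem_cons.mp hp with rfl | hp
      · exact Or.inr rfl
      · exact hsupp p hp
    · rw [rayParity_cons, hpar, crossesRay]
      split_ifs <;> first | decide | omega

/-- Two walks in the unit grid graph staying in the half-plane `{p | p.1 ≤ j}`, the first
from `(j,a)` to `(j,c)` and the second from `(j,b)` to `(j,d)` with `a < b < c < d`,
must share a common vertex. -/
theorem interleaved_walks_cross (j a b c d : ℤ) (hab : a < b) (hbc : b < c) (hcd : c < d)
    (W₁ : unitGrid.Walk (j, a) (j, c)) (W₂ : unitGrid.Walk (j, b) (j, d))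
    (h₁ : ∀ p ∈ W₁.support, p.1 ≤ j) (h₂ : ∀ p ∈ W₂.support, p.1 ≤ j) :
    ∃ p : ℤ × ℤ, p ∈ W₁.support ∧ p ∈ W₂.support := by
  by_contra! hdisj
  obtain ⟨P, hPsupp, hPpar⟩ := exists_walk_down_right_column j a c (by omega)
  have hright : unitGrid.Adj (j, c) (j + 1, c) := unitGrid_adj_iff.mpr (by simp)
  let C := W₁.append (.cons hright P)
  have hCpar : ∀ y, rayParity C (j, y) = if a ≤ y ∧ y < c then 1 else 0 := fun y => by
    rw [rayParity_append, rayParity_cons, hPpar,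
      rayParity_eq_zero_of_forall_fst_le W₁ _ h₁, crossesRay, if_neg (by simp), zero_add, zero_add]
  have hW₂C : ∀ p ∈ W₂.support, p ∉ C.support := by
    intro p hp hpC
    rcases (Walk.mem_support_append_iff _ _).mp hpC with hpW₁ | hpC
    · exact hdisj p hpW₁ hp
    rcases List.mem_cons.mp hpC with rfl | hpP
    · exact hdisj _ W₁.end_mem_support hp
    rcases hPsupp p hpP with rfl | hcol
    · exact hdisj _ W₁.start_mem_support hp
    · linarith [h₂ p hp]
  have := rayParity_eq_of_forall_notMem C W₂ hW₂C
  rw [hCpar, hCpar, if_pos ⟨hab.le, hbc⟩, if_neg (by omega)] at this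
  exact one_ne_zero this
end

section
/- For every natural number n, the number of arc configurations on n linearly ordered points equals the n-th Catalan number. Here an arc configuration is a set E of pairs (i,j) with i < j in Fin n such that (i) whenever two distinct arcs of E share an endpoint p, then p is the left (smaller) endpoint of both arcs, and (ii) no two arcs cross, i.e. there are no arcs (i,j) and (k,l) in E with i < k < j < l. -/
/-- An arc configuration on `n` linearly ordered points: a set `E` of arcs `(i,j)` with
`i < j` such that (i) whenever two distinct arcs share an endpoint `p`, then `p` is the
left endpoint of both arcs, and (ii) no two arcs cross. -/
def IsArcConfig (n : ℕ) (E : Finset (Fin n × Fin n)) : Prop :=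
  (∀ a ∈ E, a.1 < a.2) ∧
  (∀ a ∈ E, ∀ b ∈ E, a ≠ b → ∀ p : Fin n,
      (p = a.1 ∨ p = a.2) → (p = b.1 ∨ p = b.2) → p = a.1 ∧ p = b.1) ∧
  ¬∃ a ∈ E, ∃ b ∈ E, a.1 < b.1 ∧ b.1 < a.2 ∧ a.2 < b.2

namespace ArcAux

abbrev Cfg (n : ℕ) := {E : Finset (Fin n × Fin n) // IsArcConfig n E}

noncomputable instance (n : ℕ) : Fintype (Cfg n) := Fintype.ofFinite _

/-- restriction along a strictly monotone map -/
lemma isArcConfig_restrict {m m' : ℕ} (f : Fin m → Fin m') (hf : StrictMono f)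
    {E : Finset (Fin m' × Fin m')} (hE : IsArcConfig m' E) :
    IsArcConfig m (Finset.univ.filter fun b : Fin m × Fin m => (f b.1, f b.2) ∈ E) := by
  obtain ⟨h1, h2, h3⟩ := hE
  refine ⟨?_, ?_, ?_⟩
  · intro a ha
    simp only [Finset.mem_filter] at ha
    have := h1 _ ha.2
    exact hf.lt_iff_lt.mp this
  · intro a ha b hb hab p hpa hpb
    simp only [Finset.mem_filter] at ha hb
    have hab' : (f a.1, f a.2) ≠ (f b.1, f b.2) := by
      intro h
      apply hab
      have := Prod.ext_iff.mp h
      exact Prod.ext (hf.injective this.1) (hf.injective this.2)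
    have := h2 _ ha.2 _ hb.2 hab' (f p)
      (by rcases hpa with h | h <;> subst h <;> simp)
      (by rcases hpb with h | h <;> subst h <;> simp)
    exact ⟨hf.injective this.1, hf.injective this.2⟩
  · rintro ⟨a, ha, b, hb, hc1, hc2, hc3⟩
    simp only [Finset.mem_filter] at ha hb
    exact h3 ⟨_, ha.2, _, hb.2, hf hc1, hf hc2, hf hc3⟩

/-- the largest right endpoint of an arc whose left endpoint is `0` (or `0` if none) -/
def hub {n : ℕ} (E : Finset (Fin (n+1) × Fin (n+1))) : ℕ :=
  (E.filter fun a => a.1 = 0).sup fun a => (a.2 : ℕ)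

lemma hub_le {n : ℕ} (E : Finset (Fin (n+1) × Fin (n+1))) : hub E ≤ n := by
  apply Finset.sup_le
  intro a _
  exact Nat.lt_succ_iff.mp a.2.isLt

def embL {n : ℕ} (j : ℕ) (h : j ≤ n) : Fin j → Fin (n+1) := fun i => ⟨i.1, by omega⟩
def embR {n : ℕ} (j : ℕ) (h : j ≤ n) : Fin (n-j) → Fin (n+1) :=
  fun i => ⟨j+1+i.1, by omega⟩

lemma embL_strictMono {n j : ℕ} (h : j ≤ n) : StrictMono (embL (n := n) j h) := by
  intro a b hab; simp only [embL, Fin.lt_def] at *; omega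
lemma embR_strictMono {n j : ℕ} (h : j ≤ n) : StrictMono (embR (n := n) j h) := by
  intro a b hab; simp only [embR, Fin.lt_def] at *; omega

/-- the gluing map -/
def glue {n : ℕ} (t : Σ i : Fin (n+1), Cfg i.1 × Cfg (n - i.1)) :
    Finset (Fin (n+1) × Fin (n+1)) :=
  (t.2.1.1.image fun b => (embL t.1.1 (Nat.lt_succ_iff.mp t.1.isLt) b.1,
      embL t.1.1 (Nat.lt_succ_iff.mp t.1.isLt) b.2)) ∪
  (t.2.2.1.image fun b => (embR t.1.1 (Nat.lt_succ_iff.mp t.1.isLt) b.1,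
      embR t.1.1 (Nat.lt_succ_iff.mp t.1.isLt) b.2)) ∪
  (if 0 < t.1.1 then {((0 : Fin (n+1)), ⟨t.1.1, t.1.isLt⟩)} else ∅)

lemma mem_glue {n : ℕ} (t : Σ i : Fin (n+1), Cfg i.1 × Cfg (n - i.1))
    {a : Fin (n+1) × Fin (n+1)} :
    a ∈ glue t ↔
      (∃ b ∈ t.2.1.1, (a.1 : ℕ) = b.1 ∧ (a.2 : ℕ) = b.2) ∨
      (∃ b ∈ t.2.2.1, (a.1 : ℕ) = t.1.1 + 1 + b.1 ∧ (a.2 : ℕ) = t.1.1 + 1 + b.2) ∨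
      (0 < t.1.1 ∧ (a.1 : ℕ) = 0 ∧ (a.2 : ℕ) = t.1.1) := by
  by_cases h0 : 0 < t.1.1
  · simp only [glue, h0, if_true, Finset.mem_union, Finset.mem_image,
      Finset.mem_singleton, Prod.ext_iff, Fin.ext_iff,
      embL, embR, Fin.val_zero, true_and, eq_comm]
    rw [or_assoc]
  · simp only [glue, h0, if_false, Finset.mem_union, Finset.mem_image,
      Finset.notMem_empty, or_false, Prod.ext_iff, Fin.ext_iff,
      embL, embR, Fin.val_zero, false_and, eq_comm]

lemma isArcConfig_glue {n : ℕ} (t : Σ i : Fin (n+1), Cfg i.1 × Cfg (n - i.1)) :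
    IsArcConfig (n+1) (glue t) := by
  obtain ⟨i, ⟨E1, c1⟩, ⟨E2, c2⟩⟩ := t
  obtain ⟨c11, c12, c13⟩ := c1
  obtain ⟨c21, c22, c23⟩ := c2
  have hv1 : ∀ b ∈ E1, (b.1 : ℕ) < (b.2 : ℕ) ∧ (b.2 : ℕ) < i.1 :=
    fun b hb => ⟨c11 b hb, b.2.isLt⟩
  have hv2 : ∀ b ∈ E2, (b.1 : ℕ) < (b.2 : ℕ) ∧ (b.2 : ℕ) < n - i.1 :=
    fun b hb => ⟨c21 b hb, b.2.isLt⟩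
  refine ⟨?_, ?_, ?_⟩
  · intro a ha
    rw [mem_glue] at ha
    dsimp only at ha
    simp only [Fin.lt_def]
    rcases ha with ⟨x, hx, h1, h2⟩ | ⟨x, hx, h1, h2⟩ | ⟨h0, h1, h2⟩
    · have := hv1 x hx; omega
    · have := hv2 x hx; omega
    · omega
  · intro a ha b hb hab p hpa hpb
    rw [mem_glue] at ha hb
    dsimp only at ha hb
    simp only [Fin.ext_iff] at hpa hpb ⊢
    have hab' : (a.1 : ℕ) ≠ (b.1 : ℕ) ∨ (a.2 : ℕ) ≠ (b.2 : ℕ) := by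
      by_contra h
      push_neg at h
      exact hab (Prod.ext (Fin.ext h.1) (Fin.ext h.2))
    rcases ha with ⟨x, hx, hx1, hx2⟩ | ⟨x, hx, hx1, hx2⟩ | ⟨h0, hx1, hx2⟩ <;>
      rcases hb with ⟨y, hy, hy1, hy2⟩ | ⟨y, hy, hy1, hy2⟩ | ⟨h0', hy1, hy2⟩
    · -- L L
      have hxv := hv1 x hx
      have hyv := hv1 y hy
      have hxy : x ≠ y := by
        rintro rfl
        rcases hab' with h | h <;> omega
      have hpj : (p : ℕ) < i.1 := by rcases hpa with h | h <;> omega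
      have h := c12 x hx y hy hxy ⟨(p : ℕ), hpj⟩
        (by rcases hpa with h | h
            · exact Or.inl (Fin.ext (show (p : ℕ) = (x.1 : ℕ) by omega))
            · exact Or.inr (Fin.ext (show (p : ℕ) = (x.2 : ℕ) by omega)))
        (by rcases hpb with h | h
            · exact Or.inl (Fin.ext (show (p : ℕ) = (y.1 : ℕ) by omega))
            · exact Or.inr (Fin.ext (show (p : ℕ) = (y.2 : ℕ) by omega)))
      have e1 : (p : ℕ) = (x.1 : ℕ) := congrArg Fin.val h.1
      have e2 : (p : ℕ) = (y.1 : ℕ) := congrArg Fin.val h.2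
      omega
    · -- L R
      have hxv := hv1 x hx
      rcases hpa with h | h <;> rcases hpb with h' | h' <;> omega
    · -- L H
      have hxv := hv1 x hx
      rcases hpa with h | h <;> rcases hpb with h' | h' <;> omega
    · -- R L
      have hyv := hv1 y hy
      rcases hpa with h | h <;> rcases hpb with h' | h' <;> omega
    · -- R R
      have hxv := hv2 x hx
      have hyv := hv2 y hy
      have hx1l := x.1.isLt
      have hy1l := y.1.isLt
      have hxy : x ≠ y := by
        rintro rfl
        rcases hab' with h | h <;> omega
      have hplb : i.1 + 1 ≤ (p : ℕ) := by rcases hpa with h | h <;> omega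
      have hpj : (p : ℕ) - (i.1 + 1) < n - i.1 := by
        rcases hpa with h | h <;> omega
      have h := c22 x hx y hy hxy ⟨(p : ℕ) - (i.1 + 1), hpj⟩
        (by rcases hpa with h | h
            · exact Or.inl (Fin.ext (show (p : ℕ) - (i.1 + 1) = (x.1 : ℕ) by omega))
            · exact Or.inr (Fin.ext (show (p : ℕ) - (i.1 + 1) = (x.2 : ℕ) by omega)))
        (by rcases hpb with h | h
            · exact Or.inl (Fin.ext (show (p : ℕ) - (i.1 + 1) = (y.1 : ℕ) by omega))
            · exact Or.inr (Fin.ext (show (p : ℕ) - (i.1 + 1) = (y.2 : ℕ) by omega)))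
      have e1 : (p : ℕ) - (i.1 + 1) = (x.1 : ℕ) := congrArg Fin.val h.1
      have e2 : (p : ℕ) - (i.1 + 1) = (y.1 : ℕ) := congrArg Fin.val h.2
      omega
    · -- R H
      have hxv := hv2 x hx
      rcases hpa with h | h <;> rcases hpb with h' | h' <;> omega
    · -- H L
      have hyv := hv1 y hy
      rcases hpa with h | h <;> rcases hpb with h' | h' <;> omega
    · -- H R
      have hyv := hv2 y hy
      rcases hpa with h | h <;> rcases hpb with h' | h' <;> omega
    · -- H H
      rcases hab' with h | h <;> omega
  · rintro ⟨a, ha, b, hb, h1, h2, h3⟩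
    rw [mem_glue] at ha hb
    dsimp only at ha hb
    simp only [Fin.lt_def] at h1 h2 h3
    rcases ha with ⟨x, hx, hx1, hx2⟩ | ⟨x, hx, hx1, hx2⟩ | ⟨h0, hx1, hx2⟩ <;>
      rcases hb with ⟨y, hy, hy1, hy2⟩ | ⟨y, hy, hy1, hy2⟩ | ⟨h0', hy1, hy2⟩
    · exact c13 ⟨x, hx, y, hy, Fin.lt_def.mpr (by omega), Fin.lt_def.mpr (by omega),
        Fin.lt_def.mpr (by omega)⟩
    · have := hv1 x hx; have := y.1.isLt; omega
    · have := hv1 x hx; omega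
    · have := hv1 y hy; have := x.1.isLt; omega
    · exact c23 ⟨x, hx, y, hy, Fin.lt_def.mpr (by omega), Fin.lt_def.mpr (by omega),
        Fin.lt_def.mpr (by omega)⟩
    · omega
    · have := hv1 y hy; omega
    · omega
    · omega

lemma hub_glue {n : ℕ} (t : Σ i : Fin (n+1), Cfg i.1 × Cfg (n - i.1)) :
    hub (glue t) = t.1.1 := by
  obtain ⟨i, ⟨E1, c1⟩, ⟨E2, c2⟩⟩ := t
  unfold hub
  apply le_antisymm
  · apply Finset.sup_le
    intro a ha
    rw [Finset.mem_filter] at ha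
    obtain ⟨ha, ha0⟩ := ha
    rw [mem_glue] at ha
    dsimp only at ha ⊢
    have h0 : (a.1 : ℕ) = 0 := by rw [ha0]; rfl
    rcases ha with ⟨b, hb, h1, h2⟩ | ⟨b, hb, h1, h2⟩ | ⟨hz, h1, h2⟩
    · have := b.2.isLt; omega
    · omega
    · omega
  · dsimp only
    by_cases hz : 0 < i.1
    · have hmem : ((0 : Fin (n+1)), (⟨i.1, i.isLt⟩ : Fin (n+1))) ∈
          glue ⟨i, ⟨E1, c1⟩, ⟨E2, c2⟩⟩ := by
        rw [mem_glue]
        exact Or.inr (Or.inr ⟨hz, rfl, rfl⟩)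
      have hmf : ((0 : Fin (n+1)), (⟨i.1, i.isLt⟩ : Fin (n+1))) ∈
          (glue ⟨i, ⟨E1, c1⟩, ⟨E2, c2⟩⟩).filter (fun a => a.1 = 0) :=
        Finset.mem_filter.mpr ⟨hmem, rfl⟩
      exact Finset.le_sup (f := fun a : Fin (n+1) × Fin (n+1) => (a.2 : ℕ)) hmf
    · omega

lemma arc_trichotomy {n : ℕ} {E : Finset (Fin (n+1) × Fin (n+1))}
    (hE : IsArcConfig (n+1) E) {a : Fin (n+1) × Fin (n+1)} (ha : a ∈ E) :
    ((a.1 : ℕ) = 0 ∧ (a.2 : ℕ) = hub E) ∨ (a.2 : ℕ) < hub E ∨ hub E < (a.1 : ℕ) := by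
  obtain ⟨h1, h2, h3⟩ := hE
  have hlv : (a.1 : ℕ) < (a.2 : ℕ) := h1 a ha
  by_cases h0 : a.1 = (0 : Fin (n+1))
  · have hle : (a.2 : ℕ) ≤ hub E :=
      Finset.le_sup (f := fun b : Fin (n+1) × Fin (n+1) => (b.2 : ℕ))
        (Finset.mem_filter.mpr ⟨ha, h0⟩)
    have h0v : (a.1 : ℕ) = 0 := by rw [h0]; rfl
    rcases eq_or_lt_of_le hle with he | hlt
    · exact Or.inl ⟨h0v, he⟩
    · exact Or.inr (Or.inl hlt)
  · have h0v : (a.1 : ℕ) ≠ 0 := fun h => h0 (Fin.ext (by simpa using h))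
    by_cases hj : 0 < hub E
    · rcases (E.filter fun b => b.1 = 0).eq_empty_or_nonempty with he | hne
      · exfalso
        have : hub E = 0 := by rw [hub, he, Finset.sup_empty]; rfl
        omega
      · obtain ⟨c, hc, hcs⟩ := Finset.exists_mem_eq_sup _ hne
          (fun b : Fin (n+1) × Fin (n+1) => (b.2 : ℕ))
        rw [Finset.mem_filter] at hc
        obtain ⟨hcE, hc0⟩ := hc
        have hc0v : (c.1 : ℕ) = 0 := by rw [hc0]; rfl
        have hcs' : hub E = (c.2 : ℕ) := hcs
        have hac : a ≠ c := by
          intro h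
          rw [h] at h0v
          exact h0v hc0v
        have hne1 : (a.1 : ℕ) ≠ hub E := by
          intro hv
          have hh := h2 a ha c hcE hac a.1 (Or.inl rfl)
            (Or.inr (Fin.ext (by omega)))
          have := congrArg Fin.val hh.2
          omega
        have hne2 : (a.2 : ℕ) ≠ hub E := by
          intro hv
          have hh := h2 a ha c hcE hac a.2 (Or.inr rfl)
            (Or.inr (Fin.ext (by omega)))
          have := congrArg Fin.val hh.1
          omega
        have hcross : ¬((a.1 : ℕ) < hub E ∧ hub E < (a.2 : ℕ)) := by
          rintro ⟨hlt1, hlt2⟩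
          exact h3 ⟨c, hcE, a, ha, Fin.lt_def.mpr (by omega), Fin.lt_def.mpr (by omega),
            Fin.lt_def.mpr (by omega)⟩
        omega
    · omega

lemma glue_subset_aux1 {n : ℕ} (i : Fin (n+1)) (x y : Cfg i.1 × Cfg (n - i.1))
    (hg : glue ⟨i, x⟩ = glue ⟨i, y⟩) : ∀ b ∈ x.1.1, b ∈ y.1.1 := by
  intro b hb
  have hin : ((⟨(b.1 : ℕ), by have := b.1.isLt; have := i.isLt; omega⟩ : Fin (n+1)),
      (⟨(b.2 : ℕ), by have := b.2.isLt; have := i.isLt; omega⟩ : Fin (n+1))) ∈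
      glue ⟨i, y⟩ := by
    rw [← hg, mem_glue]
    exact Or.inl ⟨b, hb, rfl, rfl⟩
  rw [mem_glue] at hin
  dsimp only at hin
  rcases hin with ⟨c, hc, h1, h2⟩ | ⟨c, hc, h1, h2⟩ | ⟨hz, h1, h2⟩
  · have hbc : b = c := Prod.ext (Fin.ext h1) (Fin.ext h2)
    rw [hbc]; exact hc
  · exfalso; have := b.1.isLt; omega
  · exfalso; have := b.2.isLt; omega

lemma glue_subset_aux2 {n : ℕ} (i : Fin (n+1)) (x y : Cfg i.1 × Cfg (n - i.1))
    (hg : glue ⟨i, x⟩ = glue ⟨i, y⟩) : ∀ b ∈ x.2.1, b ∈ y.2.1 := by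
  intro b hb
  have hin : ((⟨i.1 + 1 + (b.1 : ℕ), by have := b.1.isLt; omega⟩ : Fin (n+1)),
      (⟨i.1 + 1 + (b.2 : ℕ), by have := b.2.isLt; omega⟩ : Fin (n+1))) ∈
      glue ⟨i, y⟩ := by
    rw [← hg, mem_glue]
    exact Or.inr (Or.inl ⟨b, hb, rfl, rfl⟩)
  rw [mem_glue] at hin
  dsimp only at hin
  rcases hin with ⟨c, hc, h1, h2⟩ | ⟨c, hc, h1, h2⟩ | ⟨hz, h1, h2⟩
  · exfalso; have := c.1.isLt; omega
  · have hbc : b = c := Prod.ext (Fin.ext (by omega))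
      (Fin.ext (by omega))
    rw [hbc]; exact hc
  · exfalso; omega

noncomputable def glueEquiv (n : ℕ) :
    (Σ i : Fin (n+1), Cfg i.1 × Cfg (n - i.1)) ≃ Cfg (n+1) := by
  apply Equiv.ofBijective (fun t => (⟨glue t, isArcConfig_glue t⟩ : Cfg (n+1)))
  constructor
  · intro t t' h
    have hg : glue t = glue t' := congrArg Subtype.val h
    have h1 : t.1 = t'.1 := Fin.ext (by rw [← hub_glue t, ← hub_glue t', hg])
    obtain ⟨i, x⟩ := t
    obtain ⟨i', y⟩ := t'
    dsimp only at h1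
    subst h1
    have hx1 : x.1.1 = y.1.1 := Finset.ext fun b =>
      ⟨glue_subset_aux1 i x y hg b, glue_subset_aux1 i y x hg.symm b⟩
    have hx2 : x.2.1 = y.2.1 := Finset.ext fun b =>
      ⟨glue_subset_aux2 i x y hg b, glue_subset_aux2 i y x hg.symm b⟩
    have : x = y := Prod.ext (Subtype.ext hx1) (Subtype.ext hx2)
    rw [this]
  · rintro ⟨E, hE⟩
    have hjn : hub E ≤ n := hub_le E
    refine ⟨⟨⟨hub E, by omega⟩,
      ⟨Finset.univ.filter fun b : Fin (hub E) × Fin (hub E) =>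
          (embL (hub E) hjn b.1, embL (hub E) hjn b.2) ∈ E,
        isArcConfig_restrict _ (embL_strictMono hjn) hE⟩,
      ⟨Finset.univ.filter fun b : Fin (n - hub E) × Fin (n - hub E) =>
          (embR (hub E) hjn b.1, embR (hub E) hjn b.2) ∈ E,
        isArcConfig_restrict _ (embR_strictMono hjn) hE⟩⟩, ?_⟩
    apply Subtype.ext
    show glue _ = E
    ext a
    rw [mem_glue]
    dsimp only
    constructor
    · rintro (⟨b, hb, h1, h2⟩ | ⟨b, hb, h1, h2⟩ | ⟨hz, h1, h2⟩)
      · rw [Finset.mem_filter] at hb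
        have he : a = (embL (hub E) hjn b.1, embL (hub E) hjn b.2) :=
          Prod.ext (Fin.ext h1) (Fin.ext h2)
        rw [he]; exact hb.2
      · rw [Finset.mem_filter] at hb
        have he : a = (embR (hub E) hjn b.1, embR (hub E) hjn b.2) :=
          Prod.ext (Fin.ext h1) (Fin.ext h2)
        rw [he]; exact hb.2
      · rcases (E.filter fun b => b.1 = 0).eq_empty_or_nonempty with he | hne
        · exfalso
          have : hub E = 0 := by rw [hub, he, Finset.sup_empty]; rfl
          omega
        · obtain ⟨c, hc, hcs⟩ := Finset.exists_mem_eq_sup _ hne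
            (fun b : Fin (n+1) × Fin (n+1) => (b.2 : ℕ))
          rw [Finset.mem_filter] at hc
          have hc0v : (c.1 : ℕ) = 0 := by rw [hc.2]; rfl
          have hcs' : hub E = (c.2 : ℕ) := hcs
          have hac : a = c := Prod.ext (Fin.ext (by omega)) (Fin.ext (by omega))
          rw [hac]; exact hc.1
    · intro ha
      have hv : (a.1 : ℕ) < (a.2 : ℕ) := hE.1 a ha
      rcases arc_trichotomy hE ha with ⟨h1, h2⟩ | hlt | hgt
      · exact Or.inr (Or.inr ⟨by omega, h1, h2⟩)
      · refine Or.inl ⟨(⟨(a.1 : ℕ), by omega⟩, ⟨(a.2 : ℕ), hlt⟩), ?_, rfl, rfl⟩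
        rw [Finset.mem_filter]
        refine ⟨Finset.mem_univ _, ?_⟩
        have he : (embL (hub E) hjn ⟨(a.1 : ℕ), by omega⟩,
            embL (hub E) hjn ⟨(a.2 : ℕ), hlt⟩) = a :=
          Prod.ext (Fin.ext rfl) (Fin.ext rfl)
        rw [he]; exact ha
      · have ha2 := a.2.isLt
        refine Or.inr (Or.inl ⟨(⟨(a.1 : ℕ) - (hub E + 1), by omega⟩,
            ⟨(a.2 : ℕ) - (hub E + 1), by omega⟩), ?_, by dsimp only; omega,
            by dsimp only; omega⟩)
        rw [Finset.mem_filter]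
        refine ⟨Finset.mem_univ _, ?_⟩
        have he : (embR (hub E) hjn ⟨(a.1 : ℕ) - (hub E + 1), by omega⟩,
            embR (hub E) hjn ⟨(a.2 : ℕ) - (hub E + 1), by omega⟩) = a :=
          Prod.ext (Fin.ext (by show hub E + 1 + ((a.1 : ℕ) - (hub E + 1)) = _; omega))
            (Fin.ext (by show hub E + 1 + ((a.2 : ℕ) - (hub E + 1)) = _; omega))
        rw [he]; exact ha

lemma card_cfg_zero : Nat.card (Cfg 0) = 1 := by
  have he : IsArcConfig 0 (∅ : Finset (Fin 0 × Fin 0)) :=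
    ⟨by simp, by simp, by simp⟩
  have hall : ∀ x : Cfg 0, x = ⟨∅, he⟩ := by
    rintro ⟨F, hF⟩
    apply Subtype.ext
    exact Finset.eq_empty_of_forall_notMem fun x _ => x.1.elim0
  rw [Nat.card_eq_one_iff_unique]
  exact ⟨⟨fun a b => (hall a).trans (hall b).symm⟩, ⟨⟨∅, he⟩⟩⟩

lemma card_cfg_succ (n : ℕ) :
    Nat.card (Cfg (n+1)) = ∑ i : Fin (n+1), Nat.card (Cfg i.1) * Nat.card (Cfg (n - i.1)) := by
  rw [← Nat.card_congr (glueEquiv n), Nat.card_eq_fintype_card, Fintype.card_sigma]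
  apply Finset.sum_congr rfl
  intro i _
  rw [Fintype.card_prod, Nat.card_eq_fintype_card, Nat.card_eq_fintype_card]

end ArcAux

/-- The number of arc configurations on `n` linearly ordered points equals the `n`-th
Catalan number. -/
theorem card_arcConfig_eq_catalan (n : ℕ) :
    Nat.card {E : Finset (Fin n × Fin n) // IsArcConfig n E} = catalan n := by
  induction n using Nat.strong_induction_on with
  | _ n ih =>
    match n with
    | 0 => simpa using ArcAux.card_cfg_zero
    | (m+1) =>
      rw [show {E : Finset (Fin (m+1) × Fin (m+1)) // IsArcConfig (m+1) E} = ArcAux.Cfg (m+1) from rfl,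
        ArcAux.card_cfg_succ, catalan_succ]
      apply Finset.sum_congr rfl
      intro i _
      rw [ih i.1 (by omega), ih (m - i.1) (by omega)]
end

section
/- For every natural number n, the number of two-colored arc configurations on n linearly ordered points equals the n-th super Catalan (little Schröder) number S n. Here a two-colored arc configuration is a set E of pairs (i,j) with i < j in Fin n satisfying (i) whenever two distinct arcs of E share an endpoint p, then p is the left (smaller) endpoint of both arcs, and (ii) no two arcs cross (there are no arcs (i,j) and (k,l) in E with i < k < j < l), together with a function assigning to each arc of E one of two colors (black or white). -/
/-!
Weight each arc configuration by `2 ^ (number of arcs)`. On points `x₀ < ⋯ < xₙ`, either no arc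
ends at the last point `m = xₙ`, or exactly one arc `(i, m)` does. In the second case condition
(i) forbids arcs ending at `i`, and non-crossing forces every other arc to lie strictly left of
`i` or inside `[i, m)`, so the configuration splits into independent configurations on these two
blocks. Since the weighted count is invariant under order embeddings, it satisfies
`w (n + 1) = w n + 2 * ∑ i < n, w i * w (n - i)`, which is the super Catalan recurrence.
-/

open Finset

section ArcConfigurations

variable {α β : Type*} [LinearOrder α] [LinearOrder β]

/-- For arcs `a.1 < a.2`, `b.1 < b.2`, condition (i) says that the only endpoint they may share
is a common left endpoint, and condition (ii) that they do not cross. -/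
def ArcsCompatible (a b : α × α) : Prop :=
  a.1 ≠ b.2 ∧ a.2 ≠ b.1 ∧ a.2 ≠ b.2 ∧
    ¬(a.1 < b.1 ∧ b.1 < a.2 ∧ a.2 < b.2) ∧ ¬(b.1 < a.1 ∧ a.1 < b.2 ∧ b.2 < a.2)

theorem ArcsCompatible.symm {a b : α × α} (h : ArcsCompatible a b) : ArcsCompatible b a :=
  ⟨h.2.1.symm, h.1.symm, h.2.2.1.symm, h.2.2.2.2, h.2.2.2.1⟩

instance : Std.Symm (ArcsCompatible (α := α)) := ⟨fun _ _ => ArcsCompatible.symm⟩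

theorem arcsCompatible_of_snd_lt_fst {a b : α × α} (ha : a.1 < a.2) (hab : a.2 < b.1)
    (hb : b.1 < b.2) : ArcsCompatible a b := by
  unfold ArcsCompatible
  grind

theorem arcsCompatible_of_nested {a b : α × α} (h₁ : a.1 ≤ b.1) (hb : b.1 < b.2)
    (h₂ : b.2 < a.2) : ArcsCompatible a b := by
  unfold ArcsCompatible
  grind

theorem arcsCompatible_prodMap (f : α ↪o β) {a b : α × α} :
    ArcsCompatible (Prod.map f f a) (Prod.map f f b) ↔ ArcsCompatible a b := by
  simp [ArcsCompatible]

def IsArcConfiguration (E : Finset (α × α)) : Prop :=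
  (∀ a ∈ E, a.1 < a.2) ∧ (E : Set (α × α)).Pairwise ArcsCompatible

theorem isArcConfig_iff_isArcConfiguration {n : ℕ} {E : Finset (Fin n × Fin n)} :
    IsArcConfig n E ↔ IsArcConfiguration E := by
  refine ⟨fun ⟨hlt, hshared, hcross⟩ => ⟨hlt, fun a ha b hb hab => ?_⟩,
    fun ⟨hlt, hcompat⟩ => ⟨hlt, fun a ha b hb hab p hpa hpb => ?_, ?_⟩⟩
  · have := hlt a ha
    have := hlt b hb
    refine ⟨fun h => ?_, fun h => ?_, fun h => ?_, fun h => hcross ⟨a, ha, b, hb, h⟩,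
      fun h => hcross ⟨b, hb, a, ha, h⟩⟩
    · have := hshared a ha b hb hab a.1 (.inl rfl) (.inr h); order
    · have := hshared a ha b hb hab a.2 (.inr rfl) (.inl h); order
    · have := hshared a ha b hb hab a.2 (.inr rfl) (.inr h); order
  · have := hcompat ha hb hab
    unfold ArcsCompatible at this
    grind
  · rintro ⟨a, ha, b, hb, hcross⟩
    obtain rfl | hab := eq_or_ne a b
    · exact lt_irrefl _ hcross.1
    · exact (hcompat ha hb hab).2.2.2.1 hcross

theorem IsArcConfiguration.mono {E F : Finset (α × α)} (hF : IsArcConfiguration F)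
    (hEF : E ⊆ F) : IsArcConfiguration E :=
  ⟨fun a ha => hF.1 a (hEF ha), hF.2.mono (coe_subset.2 hEF)⟩

theorem isArcConfiguration_map (f : α ↪o β) {E : Finset (α × α)} :
    IsArcConfiguration (E.map (f.toEmbedding.prodMap f.toEmbedding)) ↔ IsArcConfiguration E := by
  rw [IsArcConfiguration, IsArcConfiguration, coe_map,
    (Function.Embedding.injective _).injOn.pairwise_image]
  have hcompat : Function.onFun ArcsCompatible (Prod.map f f) = ArcsCompatible := by
    ext a b
    exact arcsCompatible_prodMap f
  simp only [forall_mem_map, Function.Embedding.coe_prodMap, Prod.map_fst, Prod.map_snd,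
    RelEmbedding.coe_toEmbedding, f.lt_iff_lt, hcompat]

theorem IsArcConfiguration.eq_of_snd_eq {E : Finset (α × α)} (hE : IsArcConfiguration E)
    {a b : α × α} (ha : a ∈ E) (hb : b ∈ E) (h : a.2 = b.2) : a = b := by
  by_contra hab
  exact (hE.2 ha hb hab).2.2.1 h

theorem IsArcConfiguration.snd_lt_or_le_fst {E : Finset (α × α)} (hE : IsArcConfiguration E)
    {i m : α} (him : (i, m) ∈ E) {a : α × α} (ha : a ∈ E) (hne : a ≠ (i, m)) (ham : a.2 ≤ m) :
    a.2 < i ∨ i ≤ a.1 := by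
  obtain ⟨-, hai, hamne, hcross, -⟩ := hE.2 ha him hne
  by_contra! h
  exact hcross ⟨h.2, lt_of_le_of_ne h.1 hai.symm, lt_of_le_of_ne ham hamne⟩

theorem IsArcConfiguration.insert_union {i m : α} (him : i < m) {E₁ E₂ : Finset (α × α)}
    (h₁ : IsArcConfiguration E₁) (h₂ : IsArcConfiguration E₂) (hE₁ : ∀ a ∈ E₁, a.2 < i)
    (hE₂ : ∀ a ∈ E₂, i ≤ a.1 ∧ a.2 < m) : IsArcConfiguration (insert (i, m) (E₁ ∪ E₂)) := by
  refine ⟨?_, ?_⟩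
  · simp only [mem_insert, mem_union]
    rintro a (rfl | ha | ha)
    exacts [him, h₁.1 a ha, h₂.1 a ha]
  · rw [coe_insert, coe_union, Set.pairwise_insert_of_symm, Set.pairwise_union_of_symm]
    refine ⟨⟨h₁.2, h₂.2, fun a ha b hb _ => arcsCompatible_of_snd_lt_fst (h₁.1 a ha)
      ((hE₁ a ha).trans_le (hE₂ b hb).1) (h₂.1 b hb)⟩, ?_⟩
    rintro b (hb | hb) -
    · exact (arcsCompatible_of_snd_lt_fst (h₁.1 b hb) (hE₁ b hb) him).symm
    · exact arcsCompatible_of_nested (hE₂ b hb).1 (h₂.1 b hb) (hE₂ b hb).2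

open Classical in
noncomputable def arcConfigurations (s : Finset α) : Finset (Finset (α × α)) :=
  (s ×ˢ s).powerset.filter IsArcConfiguration

theorem mem_arcConfigurations {s : Finset α} {E : Finset (α × α)} :
    E ∈ arcConfigurations s ↔ E ⊆ s ×ˢ s ∧ IsArcConfiguration E := by
  simp [arcConfigurations]

noncomputable def numColoredArcConfigs (s : Finset α) : ℕ :=
  ∑ E ∈ arcConfigurations s, 2 ^ #E

theorem numColoredArcConfigs_empty : numColoredArcConfigs (∅ : Finset α) = 1 := by
  have : IsArcConfiguration (∅ : Finset (α × α)) := ⟨by simp, by simp⟩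
  simp [numColoredArcConfigs, arcConfigurations, filter_singleton, this]

theorem arcConfigurations_map (f : α ↪o β) (s : Finset α) :
    arcConfigurations (s.map f.toEmbedding) = (arcConfigurations s).map
      (mapEmbedding (f.toEmbedding.prodMap f.toEmbedding)).toEmbedding := by
  ext E
  simp only [mem_arcConfigurations, mem_map, ← prodMap_map_product, subset_map_iff]
  constructor
  · rintro ⟨⟨E', hE's, rfl⟩, hE⟩
    exact ⟨E', ⟨hE's, (isArcConfiguration_map f).1 hE⟩, rfl⟩
  · rintro ⟨E', ⟨hE's, hE'⟩, rfl⟩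
    exact ⟨⟨E', hE's, rfl⟩, (isArcConfiguration_map f).2 hE'⟩

theorem numColoredArcConfigs_map (f : α ↪o β) (s : Finset α) :
    numColoredArcConfigs (s.map f.toEmbedding) = numColoredArcConfigs s := by
  simp [numColoredArcConfigs, arcConfigurations_map, sum_map]

end ArcConfigurations

section Recursion

variable {α : Type*} [LinearOrder α] {s : Finset α} {m : α}

theorem mem_product_of_mem_insert_product (hm : ∀ x ∈ s, x < m) {a : α × α}
    (ha : a ∈ insert m s ×ˢ insert m s) (hlt : a.1 < a.2) (ham : a.2 ≠ m) : a ∈ s ×ˢ s := by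
  simp only [mem_product, mem_insert] at ha ⊢
  obtain ⟨h₁ | h₁, h₂ | h₂⟩ := ha
  · exact absurd h₂ ham
  · exact absurd (hm _ h₂) (h₁ ▸ hlt).not_gt
  · exact absurd h₂ ham
  · exact ⟨h₁, h₂⟩

theorem mem_filter_lt_product_or_mem_filter_le_product (hm : ∀ x ∈ s, x < m)
    {E : Finset (α × α)} (hE : E ∈ arcConfigurations (insert m s)) {i : α} (him : (i, m) ∈ E)
    {a : α × α} (ha : a ∈ E) (hne : a ≠ (i, m)) :
    a ∈ {x ∈ s | x < i} ×ˢ {x ∈ s | x < i} ∨ a ∈ {x ∈ s | i ≤ x} ×ˢ {x ∈ s | i ≤ x} := by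
  obtain ⟨hEs, hE⟩ := mem_arcConfigurations.1 hE
  have hlt := hE.1 a ha
  have ham : a.2 ≠ m := fun h => hne (hE.eq_of_snd_eq ha him h)
  have has := mem_product.1 (mem_product_of_mem_insert_product hm (hEs ha) hlt ham)
  simp only [mem_product, mem_filter]
  rcases hE.snd_lt_or_le_fst him ha hne (hm _ has.2).le with h | h
  · exact .inl ⟨⟨has.1, hlt.trans h⟩, has.2, h⟩
  · exact .inr ⟨⟨has.1, h⟩, has.2, h.trans hlt.le⟩

theorem disjoint_filter_lt_product_filter_le (s : Finset α) (i : α) :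
    Disjoint ({x ∈ s | x < i} ×ˢ {x ∈ s | x < i}) ({x ∈ s | i ≤ x} ×ˢ {x ∈ s | i ≤ x}) :=
  disjoint_product.2 (.inl (disjoint_filter.2 fun _ _ hx hx' => hx'.not_gt hx))

theorem insert_union_mem_arcConfigurations_insert (hm : ∀ x ∈ s, x < m) {i : α} (hi : i ∈ s)
    {E₁ E₂ : Finset (α × α)} (hE₁ : E₁ ∈ arcConfigurations {x ∈ s | x < i})
    (hE₂ : E₂ ∈ arcConfigurations {x ∈ s | i ≤ x}) :
    insert (i, m) (E₁ ∪ E₂) ∈ arcConfigurations (insert m s) := by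
  obtain ⟨hE₁s, hE₁⟩ := mem_arcConfigurations.1 hE₁
  obtain ⟨hE₂s, hE₂⟩ := mem_arcConfigurations.1 hE₂
  have hsub : ∀ t ⊆ s, t ×ˢ t ⊆ insert m s ×ˢ insert m s := fun _ ht =>
    product_subset_product (ht.trans (subset_insert _ _)) (ht.trans (subset_insert _ _))
  refine mem_arcConfigurations.2 ⟨insert_subset (mem_product.2
    ⟨mem_insert_of_mem hi, mem_insert_self _ _⟩) (union_subset
      (hE₁s.trans (hsub _ (filter_subset _ _))) (hE₂s.trans (hsub _ (filter_subset _ _)))),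
    hE₁.insert_union (hm i hi) hE₂ (fun a ha => ?_) (fun a ha => ?_)⟩
  · exact (mem_filter.1 (mem_product.1 (hE₁s ha)).2).2
  · have ha := mem_product.1 (hE₂s ha)
    exact ⟨(mem_filter.1 ha.1).2, hm _ (mem_filter.1 ha.2).1⟩

/-- Removing the arc `(i, m)` ending at the maximum splits a configuration into the arcs left
of `i` and the arcs nested under `(i, m)`; the arc itself carries one of two colours. -/
theorem sum_arcConfigurations_insert_filter_mem (hm : ∀ x ∈ s, x < m) {i : α} (hi : i ∈ s) :
    ∑ E ∈ (arcConfigurations (insert m s)).filter ((i, m) ∈ ·), 2 ^ #E =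
      2 * (numColoredArcConfigs {x ∈ s | x < i} * numColoredArcConfigs {x ∈ s | i ≤ x}) := by
  have hLR := disjoint_filter_lt_product_filter_le s i
  set L := {x ∈ s | x < i}
  set R := {x ∈ s | i ≤ x}
  have hmL : (i, m) ∉ L ×ˢ L := fun h => (mem_filter.1 (mem_product.1 h).2).2.not_gt (hm i hi)
  have hmR : (i, m) ∉ R ×ˢ R := fun h => (hm m (mem_filter.1 (mem_product.1 h).2).1).false
  rw [numColoredArcConfigs, numColoredArcConfigs, sum_mul_sum, ← sum_product', mul_sum]
  symm
  refine sum_nbij' (fun p => insert (i, m) (p.1 ∪ p.2)) (fun E => (E ∩ L ×ˢ L, E ∩ R ×ˢ R))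
    (fun p hp => mem_filter.2 ⟨insert_union_mem_arcConfigurations_insert hm hi
      (mem_product.1 hp).1 (mem_product.1 hp).2, mem_insert_self _ _⟩) ?_ ?_ ?_ ?_
  · intro E hE
    have hE := (mem_arcConfigurations.1 (mem_filter.1 hE).1).2
    simp only [mem_product, mem_arcConfigurations]
    exact ⟨⟨inter_subset_right, hE.mono inter_subset_left⟩,
      ⟨inter_subset_right, hE.mono inter_subset_left⟩⟩
  · rintro ⟨E₁, E₂⟩ hp
    simp only [mem_product, mem_arcConfigurations] at hp
    obtain ⟨⟨hE₁L, -⟩, hE₂R, -⟩ := hp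
    simp only [insert_inter_of_notMem hmL, insert_inter_of_notMem hmR,
      union_inter_distrib_right, inter_eq_left.2 hE₁L, inter_eq_left.2 hE₂R,
      disjoint_iff_inter_eq_empty.1 (hLR.mono_left hE₁L),
      disjoint_iff_inter_eq_empty.1 (hLR.symm.mono_left hE₂R), union_empty, empty_union]
  · intro E hE
    obtain ⟨hE, him⟩ := mem_filter.1 hE
    ext a
    simp only [mem_insert, mem_union, mem_inter]
    refine ⟨by rintro (rfl | ⟨ha, -⟩ | ⟨ha, -⟩) <;> assumption, fun ha => ?_⟩
    by_cases hne : a = (i, m)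
    · exact .inl hne
    · rcases mem_filter_lt_product_or_mem_filter_le_product hm hE him ha hne with h | h
      exacts [.inr (.inl ⟨ha, h⟩), .inr (.inr ⟨ha, h⟩)]
  · rintro ⟨E₁, E₂⟩ hp
    simp only [mem_product, mem_arcConfigurations] at hp
    obtain ⟨⟨hE₁L, -⟩, hE₂R, -⟩ := hp
    have hnot : (i, m) ∉ E₁ ∪ E₂ := by
      rw [mem_union]
      exact fun h => h.elim (fun h => hmL (hE₁L h)) (fun h => hmR (hE₂R h))
    rw [card_insert_of_notMem hnot, card_union_of_disjoint (hLR.mono hE₁L hE₂R), pow_succ,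
      pow_add, mul_comm]

theorem filter_not_exists_arcConfigurations_insert (hm : ∀ x ∈ s, x < m) :
    (arcConfigurations (insert m s)).filter (fun E => ¬∃ i ∈ s, (i, m) ∈ E) =
      arcConfigurations s := by
  ext E
  simp only [mem_filter, mem_arcConfigurations, not_exists, not_and]
  constructor
  · rintro ⟨⟨hEs, hE⟩, hm'⟩
    refine ⟨fun a ha => mem_product_of_mem_insert_product hm (hEs ha) (hE.1 a ha) ?_, hE⟩
    intro ham
    have ha₁ : a.1 ∈ s :=
      (mem_insert.1 (mem_product.1 (hEs ha)).1).resolve_left (ham ▸ hE.1 a ha).ne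
    exact hm' a.1 ha₁ (ham ▸ ha)
  · rintro ⟨hEs, hE⟩
    refine ⟨⟨hEs.trans (product_subset_product (subset_insert _ _) (subset_insert _ _)), hE⟩,
      fun i _ him => (hm m (mem_product.1 (hEs him)).2).false⟩

theorem numColoredArcConfigs_insert (hm : ∀ x ∈ s, x < m) :
    numColoredArcConfigs (insert m s) = numColoredArcConfigs s + 2 *
      ∑ i ∈ s, numColoredArcConfigs {x ∈ s | x < i} * numColoredArcConfigs {x ∈ s | i ≤ x} := by
  classical
  rw [numColoredArcConfigs, ← sum_filter_not_add_sum_filter _ (fun E => ∃ i ∈ s, (i, m) ∈ E),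
    filter_not_exists_arcConfigurations_insert hm, mul_sum,
    ← sum_congr rfl fun i hi => sum_arcConfigurations_insert_filter_mem hm hi, ← sum_biUnion]
  · congr 2
    ext E
    simp only [mem_filter, mem_biUnion]
    exact ⟨fun ⟨hE, i, hi, him⟩ => ⟨i, hi, hE, him⟩, fun ⟨i, hi, hE, him⟩ => ⟨hE, i, hi, him⟩⟩
  · intro i _ j _ hij
    rw [Function.onFun, disjoint_filter]
    intro E hE hi hj
    exact hij (congrArg Prod.fst ((mem_arcConfigurations.1 hE).2.eq_of_snd_eq hi hj rfl))

end Recursion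

theorem card_coloredArcConfigurations {α : Type*} [LinearOrder α] [Fintype α] :
    Nat.card {p : Σ E : Finset (α × α), {a : α × α // a ∈ E} → Bool // IsArcConfiguration p.1} =
      numColoredArcConfigs (univ : Finset α) := by
  classical
  rw [Nat.card_congr (Equiv.subtypeSigmaEquiv _ _), Nat.card_sigma, numColoredArcConfigs,
    arcConfigurations, univ_product_univ, powerset_univ]
  simp only [Nat.card_eq_fintype_card, Fintype.card_fun, Fintype.card_coe, Fintype.card_bool]
  exact (sum_subtype (M := ℕ) _ (by simp) (fun E => 2 ^ #E)).symm

theorem numColoredArcConfigs_Ico {i n : ℕ} (hin : i ≤ n) :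
    numColoredArcConfigs (Ico i n) = numColoredArcConfigs (range (n - i)) := by
  rw [← numColoredArcConfigs_map (OrderEmbedding.addLeft i) (range (n - i)), range_eq_Ico]
  congr 1
  exact ((map_add_left_Ico 0 (n - i) i).trans (by rw [add_zero, Nat.add_sub_cancel' hin])).symm

theorem numColoredArcConfigs_range_add_one (n : ℕ) :
    numColoredArcConfigs (range (n + 1)) = numColoredArcConfigs (range n) +
      2 * ∑ i ∈ range n, numColoredArcConfigs (range i) * numColoredArcConfigs (range (n - i)) := by
  rw [range_add_one, numColoredArcConfigs_insert fun x hx => mem_range.1 hx]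
  congr 2
  refine sum_congr rfl fun i hi => ?_
  have hlt : {x ∈ range n | x < i} = range i := by
    ext x
    simp only [mem_filter, mem_range]
    have := mem_range.1 hi
    omega
  have hle : {x ∈ range n | i ≤ x} = Ico i n := by
    ext x
    simp only [mem_filter, mem_range, mem_Ico]
    omega
  rw [hlt, hle, numColoredArcConfigs_Ico (mem_range.1 hi).le]

theorem numColoredArcConfigs_range_eq (S : ℕ → ℕ) (hS0 : S 0 = 1)
    (hSrec : ∀ n, S (n + 1) + S n = 2 * ∑ i ∈ range (n + 1), S i * S (n - i)) (n : ℕ) :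
    numColoredArcConfigs (range n) = S n := by
  induction n using Nat.strong_induction_on with
  | _ n ih =>
    cases n with
    | zero => rw [range_zero, numColoredArcConfigs_empty, hS0]
    | succ n =>
      have hS := hSrec n
      rw [sum_range_succ, Nat.sub_self, hS0, mul_one, mul_add] at hS
      have hsum : ∑ i ∈ range n, numColoredArcConfigs (range i) *
          numColoredArcConfigs (range (n - i)) = ∑ i ∈ range n, S i * S (n - i) :=
        sum_congr rfl fun i hi => by
          rw [ih i (by have := mem_range.1 hi; omega), ih (n - i) (by omega)]
      rw [numColoredArcConfigs_range_add_one, ih n (by omega), hsum]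
      omega

/-- The number of two-colored arc configurations on `n` linearly ordered points (an arc
configuration together with a black/white coloring of its arcs) equals the `n`-th super
Catalan (little Schröder) number `S n`, where `S 0 = 1` and
`S (n+1) + S n = 2 * ∑_{i=0}^{n} S i * S (n-i)`. -/
theorem card_coloredArcConfig_eq_superCatalan (S : ℕ → ℕ) (hS0 : S 0 = 1)
    (hSrec : ∀ n, S (n + 1) + S n = 2 * ∑ i ∈ Finset.range (n + 1), S i * S (n - i))
    (n : ℕ) :
    Nat.card {p : Σ E : Finset (Fin n × Fin n), {a : Fin n × Fin n // a ∈ E} → Bool //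
        IsArcConfig n p.1} = S n := by
  have hconfig : IsArcConfig n = IsArcConfiguration :=
    funext fun _ => propext isArcConfig_iff_isArcConfiguration
  have hrange : univ.map (Fin.valOrderEmb n).toEmbedding = range n :=
    Fin.map_valEmbedding_univ.trans (Nat.Iio_eq_range n)
  rw [hconfig, card_coloredArcConfigurations, ← numColoredArcConfigs_map (Fin.valOrderEmb n),
    hrange, numColoredArcConfigs_range_eq S hS0 hSrec]
end

section
/- There exists a constant C > 0 such that for all natural numbers h, the sum ∑_{k=0}^{h} (h choose k) · S k is at most C · (4 + √8)^{h+1} / (h+1)^{3/2}, where S is the sequence of super Catalan (little Schröder) numbers. -/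
/-!
Let `T h = ∑ₖ (h choose k) S k` and `t = ∑ T h Xʰ`. The identity
`∑_{i+j=n} (i choose k) (j choose l) = (n+1 choose k+l+1)` turns the convolution recurrence of
`S` into `2X(1 - X)t² = t - 1`, so `(1 - 4X(1 - X)t)² = 1 - 8X + 8X² = (1 - 4aX)(1 - 4bX)` with
`a, b = (4 ± √8)/4`. Since `1 - 2cX·C(cX)` is the square root of `1 - 4cX` for the Catalan
series `C`, this gives `2(1 - X)t = aC(aX) + bC(bX) - X·C(aX)C(bX)`. The last product has
nonnegative coefficients and `b ≤ a`, hence `T h ≤ ∑_{n ≤ h} catalan n · a^(n+1)`. Finally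
`catalan n ≤ 4ⁿ/(n+1)^(3/2)`, and the terms `(4a)ⁿ/(n+1)^(3/2)` at least double from one `n`
to the next, so their sum is at most twice the last one.
-/

open Finset PowerSeries

namespace Nat

theorem sum_antidiagonal_choose_mul_choose (k l n : ℕ) :
    ∑ ij ∈ antidiagonal n, ij.1.choose k * ij.2.choose l = (n + 1).choose (k + l + 1) := by
  induction n generalizing l with
  | zero => rcases k with _ | k <;> rcases l with _ | l <;> simp [choose_eq_zero_of_lt]
  | succ n ih =>
    rw [Nat.sum_antidiagonal_succ']
    rcases l with _ | l
    · have h := ih 0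
      simp only [choose_zero_right, mul_one, add_zero] at h ⊢
      rw [h, choose_succ_succ' (n + 1) k, add_comm]
    · simp only [choose_succ_succ', choose_zero_succ, mul_zero, zero_add, mul_add,
        sum_add_distrib, ih]
      rw [← add_assoc k l 1, choose_succ_succ' n (k + l)]

theorem sum_range_choose_eq_choose_succ (m n : ℕ) :
    ∑ j ∈ range (n + 1), j.choose m = (n + 1).choose (m + 1) := by
  simpa [Nat.sum_antidiagonal_eq_sum_range_succ_mk] using
    sum_antidiagonal_choose_mul_choose m 0 n

end Nat

section BinomialTransform

variable {R : Type*} [CommSemiring R]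

def binomialTransform (f : ℕ → R) (n : ℕ) : R := ∑ k ∈ range (n + 1), n.choose k * f k

theorem binomialTransform_zero (f : ℕ → R) : binomialTransform f 0 = f 0 := by
  simp [binomialTransform]

theorem binomialTransform_eq_sum_range (f : ℕ → R) {n N : ℕ} (h : n < N) :
    binomialTransform f n = ∑ k ∈ range N, n.choose k * f k := by
  refine sum_subset (range_subset_range.2 h) fun k _ hk => ?_
  rw [Nat.choose_eq_zero_of_lt (by simpa using hk), Nat.cast_zero, zero_mul]

theorem binomialTransform_succ (f : ℕ → R) (n : ℕ) :
    binomialTransform f (n + 1) = binomialTransform (fun k => f k + f (k + 1)) n := by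
  simp only [binomialTransform, mul_add, sum_add_distrib]
  exact sum_choose_succ_mul (fun i _ => f i) n

theorem binomialTransform_const_mul (c : R) (f : ℕ → R) (n : ℕ) :
    binomialTransform (fun k => c * f k) n = c * binomialTransform f n := by
  simp only [binomialTransform, mul_sum]
  exact sum_congr rfl fun k _ => mul_left_comm _ _ _

theorem sum_antidiagonal_binomialTransform_mul_eq_sum_choose (f g : ℕ → R) (n : ℕ) :
    ∑ ij ∈ antidiagonal n, binomialTransform f ij.1 * binomialTransform g ij.2 =
      ∑ k ∈ range (n + 1), ∑ l ∈ range (n + 1),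
        ((n + 1).choose (k + l + 1) : R) * (f k * g l) := by
  calc ∑ ij ∈ antidiagonal n, binomialTransform f ij.1 * binomialTransform g ij.2
      = ∑ ij ∈ antidiagonal n, ∑ k ∈ range (n + 1), ∑ l ∈ range (n + 1),
          (ij.1.choose k * ij.2.choose l : R) * (f k * g l) := by
        refine sum_congr rfl fun ij hij => ?_
        have hi := Nat.lt_succ_of_le (HasAntidiagonal.antidiagonal.fst_le hij)
        have hj := Nat.lt_succ_of_le (HasAntidiagonal.antidiagonal.snd_le hij)
        rw [binomialTransform_eq_sum_range f hi, binomialTransform_eq_sum_range g hj, sum_mul_sum]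
        exact sum_congr rfl fun k _ => sum_congr rfl fun l _ => by ring
    _ = ∑ k ∈ range (n + 1), ∑ l ∈ range (n + 1),
          (∑ ij ∈ antidiagonal n, (ij.1.choose k * ij.2.choose l : R)) * (f k * g l) := by
        simp_rw [sum_mul]
        rw [sum_comm]
        exact sum_congr rfl fun k _ => sum_comm
    _ = _ := by
        simp_rw [← Nat.cast_mul, ← Nat.cast_sum, Nat.sum_antidiagonal_choose_mul_choose]

theorem binomialTransform_convolution_eq_sum_choose (f g : ℕ → R) {n j : ℕ} (hj : j ≤ n) :
    binomialTransform (fun m => ∑ i ∈ range (m + 1), f i * g (m - i)) j =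
      ∑ k ∈ range (n + 1), ∑ l ∈ range (n + 1), (j.choose (k + l) : R) * (f k * g l) := by
  rw [binomialTransform_eq_sum_range _ (Nat.lt_succ_of_le hj)]
  calc ∑ m ∈ range (n + 1), (j.choose m : R) * ∑ i ∈ range (m + 1), f i * g (m - i)
      = ∑ m ∈ range (n + 1), ∑ i ∈ range (m + 1),
          (j.choose (i + (m - i)) : R) * (f i * g (m - i)) := by
        refine sum_congr rfl fun m _ => ?_
        rw [mul_sum]
        refine sum_congr rfl fun i hi => ?_
        rw [Nat.add_sub_cancel' (Nat.lt_succ_iff.1 (mem_range.1 hi))]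
    _ = ∑ k ∈ range (n + 1), ∑ l ∈ range (n + 1 - k),
          (j.choose (k + l) : R) * (f k * g l) :=
        sum_range_diag_flip (n + 1) fun k l => (j.choose (k + l) : R) * (f k * g l)
    _ = _ := by
        refine sum_congr rfl fun k _ => sum_subset (range_subset_range.2 (Nat.sub_le _ _)) ?_
        intro l _ hl
        rw [Nat.choose_eq_zero_of_lt (by simp at hl; omega), Nat.cast_zero, zero_mul]

/-- In generating functions: the product of two binomial transforms is the binomial transform of
the product, divided by `1 - X`. -/
theorem sum_antidiagonal_binomialTransform_mul (f g : ℕ → R) (n : ℕ) :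
    ∑ ij ∈ antidiagonal n, binomialTransform f ij.1 * binomialTransform g ij.2 =
      ∑ j ∈ range (n + 1),
        binomialTransform (fun m => ∑ i ∈ range (m + 1), f i * g (m - i)) j := by
  rw [sum_antidiagonal_binomialTransform_mul_eq_sum_choose,
    sum_congr rfl fun j hj => binomialTransform_convolution_eq_sum_choose f g
      (Nat.lt_succ_iff.1 (mem_range.1 hj)), eq_comm, sum_comm]
  refine sum_congr rfl fun k _ => sum_comm.trans (sum_congr rfl fun l _ => ?_)
  rw [← sum_mul, ← Nat.cast_sum, Nat.sum_range_choose_eq_choose_succ]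

end BinomialTransform

namespace PowerSeries

theorem coeff_mul_mk_one {R : Type*} [Semiring R] (p : R⟦X⟧) (n : ℕ) :
    coeff n (p * PowerSeries.mk 1) = ∑ k ∈ range (n + 1), coeff k p := by
  simp [coeff_mul, Nat.sum_antidiagonal_eq_sum_range_succ_mk]

theorem coeff_mul_nonneg {R : Type*} [Semiring R] [PartialOrder R] [IsOrderedRing R]
    {p q : R⟦X⟧} (hp : ∀ n, 0 ≤ coeff n p) (hq : ∀ n, 0 ≤ coeff n q) (n : ℕ) :
    0 ≤ coeff n (p * q) := by
  rw [coeff_mul]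
  exact sum_nonneg fun ij _ => mul_nonneg (hp _) (hq _)

variable {R : Type*} [CommRing R]

theorem eq_of_sq_eq_of_constantCoeff_eq [IsDomain R] [NeZero (2 : R)] {p q : R⟦X⟧}
    (hsq : p ^ 2 = q ^ 2) (h0 : constantCoeff p = constantCoeff q) (hq : constantCoeff q ≠ 0) :
    p = q := by
  refine (sq_eq_sq_iff_eq_or_eq_neg.1 hsq).resolve_right fun h => hq ?_
  rw [h, map_neg] at h0
  have h2 : 2 * constantCoeff q = 0 := by linear_combination -h0
  exact (mul_eq_zero.1 h2).resolve_left two_ne_zero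

theorem two_mul_X_mul_one_sub_X_mul_mk_binomialTransform_sq {f : ℕ → R} (hf0 : f 0 = 1)
    (hf : ∀ n, f (n + 1) + f n = 2 * ∑ i ∈ range (n + 1), f i * f (n - i)) :
    2 * X * (1 - X) * PowerSeries.mk (binomialTransform f) ^ 2 =
      PowerSeries.mk (binomialTransform f) - 1 := by
  set t := PowerSeries.mk (binomialTransform f)
  set shift := PowerSeries.mk fun n => binomialTransform f (n + 1)
  have ht : 2 * t ^ 2 = shift * PowerSeries.mk 1 := by
    ext n
    rw [coeff_mul_mk_one, pow_two, ← map_ofNat C, coeff_C_mul, coeff_mul]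
    simp only [t, shift, coeff_mk, sum_antidiagonal_binomialTransform_mul, mul_sum,
      binomialTransform_succ]
    refine sum_congr rfl fun k _ => ?_
    rw [← binomialTransform_const_mul]
    exact congrArg (binomialTransform · k) (funext fun m => by rw [← hf, add_comm])
  calc 2 * X * (1 - X) * t ^ 2 = X * shift * (PowerSeries.mk 1 * (1 - X)) := by
        linear_combination (X * (1 - X)) * ht
    _ = t - 1 := by
        rw [mk_one_mul_one_sub_eq_one, mul_one]
        simpa [t, binomialTransform_zero, hf0] using (sub_const_eq_X_mul_shift t).symm

noncomputable def scaledCatalanSeries (c : R) : R⟦X⟧ :=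
  rescale c (catalanSeries.map (Nat.castRingHom R))

theorem coeff_scaledCatalanSeries (c : R) (n : ℕ) :
    coeff n (scaledCatalanSeries c) = catalan n * c ^ n := by
  simp [scaledCatalanSeries, coeff_rescale, mul_comm]

theorem coeff_scaledCatalanSeries_nonneg [PartialOrder R] [IsOrderedRing R] {c : R} (hc : 0 ≤ c)
    (n : ℕ) : 0 ≤ coeff n (scaledCatalanSeries c) := by
  rw [coeff_scaledCatalanSeries]
  exact mul_nonneg (Nat.cast_nonneg _) (pow_nonneg hc n)

theorem one_sub_two_mul_C_mul_X_mul_scaledCatalanSeries_sq (c : R) :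
    (1 - 2 * C c * X * scaledCatalanSeries c) ^ 2 = 1 - 4 * C c * X := by
  have h := congrArg (fun p => rescale c (p.map (Nat.castRingHom R)))
    catalanSeries_sq_mul_X_add_one
  simp only [map_add, map_mul, map_pow, map_X, map_one, rescale_X] at h
  rw [scaledCatalanSeries]
  linear_combination (4 * C c * X) * h

theorem two_mul_one_sub_X_mul_eq_scaledCatalanSeries [IsDomain R] [NeZero (2 : R)] {t : R⟦X⟧}
    (ht : 2 * X * (1 - X) * t ^ 2 = t - 1) {a b : R} (hab : a + b = 2)
    (hab' : 2 * (a * b) = 1) :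
    2 * (1 - X) * t = C a * scaledCatalanSeries a + C b * scaledCatalanSeries b -
      X * scaledCatalanSeries a * scaledCatalanSeries b := by
  set Ka := scaledCatalanSeries a
  set Kb := scaledCatalanSeries b
  have hC : C a + C b = 2 := by rw [← map_add, hab, map_ofNat]
  have hC' : 2 * (C a * C b) = (1 : R⟦X⟧) := by
    rw [← map_mul, ← map_ofNat C 2, ← map_mul, hab', map_one]
  have hsq : (1 - 4 * X * (1 - X) * t) ^ 2 =
      ((1 - 2 * C a * X * Ka) * (1 - 2 * C b * X * Kb)) ^ 2 := by
    rw [mul_pow, one_sub_two_mul_C_mul_X_mul_scaledCatalanSeries_sq,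
      one_sub_two_mul_C_mul_X_mul_scaledCatalanSeries_sq]
    linear_combination (8 * X * (1 - X)) * ht + 4 * X * hC - 8 * X ^ 2 * hC'
  have hsqrt := eq_of_sq_eq_of_constantCoeff_eq hsq (by simp) (by simp)
  have h2X : X * 2 * (2 * (1 - X) * t - (C a * Ka + C b * Kb - X * Ka * Kb)) = 0 := by
    linear_combination -hsqrt - 2 * X ^ 2 * Ka * Kb * hC'
  have h2X_ne : X * 2 ≠ (0 : R⟦X⟧) := mul_ne_zero X_ne_zero fun h =>
    (two_ne_zero : (2 : R) ≠ 0) <| C_injective (by rw [map_ofNat, h, map_zero])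
  exact sub_eq_zero.1 ((mul_eq_zero.1 h2X).resolve_left h2X_ne)

end PowerSeries

theorem binomialTransform_le_sum_catalan {f : ℕ → ℝ} (hf0 : f 0 = 1)
    (hf : ∀ n, f (n + 1) + f n = 2 * ∑ i ∈ range (n + 1), f i * f (n - i))
    {a b : ℝ} (hab : a + b = 2) (hab' : 2 * (a * b) = 1) (hb : 0 ≤ b) (hba : b ≤ a)
    (h : ℕ) :
    binomialTransform f h ≤ ∑ n ∈ range (h + 1), catalan n * a ^ (n + 1) := by
  have key := two_mul_one_sub_X_mul_eq_scaledCatalanSeries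
    (two_mul_X_mul_one_sub_X_mul_mk_binomialTransform_sq hf0 hf) hab hab'
  set F := C a * scaledCatalanSeries a + C b * scaledCatalanSeries b -
    X * scaledCatalanSeries a * scaledCatalanSeries b
  have h2t : 2 * PowerSeries.mk (binomialTransform f) = F * PowerSeries.mk 1 := by
    rw [← key]
    linear_combination
      (-2 * PowerSeries.mk (binomialTransform f)) * mk_one_mul_one_sub_eq_one ℝ
  have hcoeff : 2 * binomialTransform f h = ∑ n ∈ range (h + 1), coeff n F := by
    rw [← coeff_mul_mk_one, ← h2t, ← map_ofNat C 2, coeff_C_mul, coeff_mk]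
  have hF : ∀ n, coeff n F ≤ 2 * (catalan n * a ^ (n + 1)) := fun n => by
    have hXK : 0 ≤ coeff n (X * scaledCatalanSeries a * scaledCatalanSeries b) :=
      coeff_mul_nonneg (coeff_mul_nonneg (fun m => by rw [coeff_X]; split_ifs <;> norm_num)
        (coeff_scaledCatalanSeries_nonneg (hb.trans hba)))
        (coeff_scaledCatalanSeries_nonneg hb) n
    have hcat := mul_le_mul_of_nonneg_left (pow_le_pow_left₀ hb hba (n + 1))
      (Nat.cast_nonneg (α := ℝ) (catalan n))
    simp only [F, map_sub, map_add, coeff_C_mul, coeff_scaledCatalanSeries]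
    rw [mul_left_comm a, ← pow_succ', mul_left_comm b, ← pow_succ']
    linarith
  have := sum_le_sum fun n (_ : n ∈ range (h + 1)) => hF n
  rw [← mul_sum, ← hcoeff] at this
  linarith

theorem succ_succ_mul_catalan_succ (n : ℕ) :
    (n + 2) * catalan (n + 1) = 2 * (2 * n + 1) * catalan n := by
  refine Nat.eq_of_mul_eq_mul_left n.succ_pos ?_
  calc (n + 1) * ((n + 2) * catalan (n + 1)) = (n + 1) * (n + 1).centralBinom := by
        rw [← succ_mul_catalan_eq_centralBinom]
    _ = (n + 1) * (2 * (2 * n + 1) * catalan n) := by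
        rw [Nat.succ_mul_centralBinom_succ, ← succ_mul_catalan_eq_centralBinom]; ring

theorem catalan_sq_mul_succ_pow_three_le (n : ℕ) : catalan n ^ 2 * (n + 1) ^ 3 ≤ 16 ^ n := by
  induction n with
  | zero => simp
  | succ n ih =>
    calc catalan (n + 1) ^ 2 * (n + 1 + 1) ^ 3 = ((n + 2) * catalan (n + 1)) ^ 2 * (n + 2) := by
          ring
      _ = 4 * (2 * n + 1) ^ 2 * (n + 2) * catalan n ^ 2 := by
          rw [succ_succ_mul_catalan_succ]; ring
      _ ≤ 16 * (n + 1) ^ 3 * catalan n ^ 2 := Nat.mul_le_mul_right _ (by nlinarith)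
      _ = 16 * (catalan n ^ 2 * (n + 1) ^ 3) := by ring
      _ ≤ 16 * 16 ^ n := Nat.mul_le_mul_left 16 ih
      _ = 16 ^ (n + 1) := (pow_succ' 16 n).symm

theorem catalan_le_four_pow_div_rpow (n : ℕ) :
    (catalan n : ℝ) ≤ 4 ^ n / ((n : ℝ) + 1) ^ ((3 : ℝ) / 2) := by
  have hx : (0 : ℝ) < (n : ℝ) + 1 := by positivity
  rw [le_div_iff₀ (by positivity),
    ← pow_le_pow_iff_left₀ (by positivity) (by positivity) two_ne_zero, mul_pow,
    ← Real.rpow_natCast (_ ^ _), ← Real.rpow_mul hx.le, ← pow_mul, mul_comm n 2, pow_mul]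
  norm_num
  exact_mod_cast catalan_sq_mul_succ_pow_three_le n

theorem sum_range_le_two_mul_of_two_mul_le_succ {α : Type*} [CommRing α] [LinearOrder α]
    [IsStrictOrderedRing α] {f : ℕ → α} (h0 : 0 ≤ f 0) (hf : ∀ n, 2 * f n ≤ f (n + 1))
    (h : ℕ) :
    ∑ n ∈ range (h + 1), f n ≤ 2 * f h := by
  induction h with
  | zero => simpa [two_mul] using h0
  | succ h ih => rw [sum_range_succ]; linarith [hf h]

theorem two_mul_pow_div_rpow_le {r : ℝ} (hr : 2 * √8 ≤ r) (n : ℕ) :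
    2 * (r ^ n / ((n : ℝ) + 1) ^ ((3 : ℝ) / 2)) ≤
      r ^ (n + 1) / (((n + 1 : ℕ) : ℝ) + 1) ^ ((3 : ℝ) / 2) := by
  have hr0 : 0 ≤ r := le_trans (by positivity) hr
  have h8 : (2 : ℝ) ^ ((3 : ℝ) / 2) = √8 := by
    rw [Real.sqrt_eq_rpow, show (8 : ℝ) = 2 ^ (3 : ℝ) by norm_num,
      ← Real.rpow_mul (by norm_num)]
    norm_num
  have hle :
      (((n + 1 : ℕ) : ℝ) + 1) ^ ((3 : ℝ) / 2) ≤ √8 * ((n : ℝ) + 1) ^ ((3 : ℝ) / 2) := by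
    calc (((n + 1 : ℕ) : ℝ) + 1) ^ ((3 : ℝ) / 2)
        ≤ (2 * ((n : ℝ) + 1)) ^ ((3 : ℝ) / 2) := by
          gcongr; push_cast; linarith
      _ = _ := by rw [Real.mul_rpow (by norm_num) (by positivity), h8]
  rw [mul_div_assoc', div_le_div_iff₀ (by positivity) (by positivity), pow_succ]
  calc 2 * r ^ n * (((n + 1 : ℕ) : ℝ) + 1) ^ ((3 : ℝ) / 2)
      ≤ 2 * r ^ n * (√8 * ((n : ℝ) + 1) ^ ((3 : ℝ) / 2)) := by gcongr
    _ = r ^ n * (2 * √8) * ((n : ℝ) + 1) ^ ((3 : ℝ) / 2) := by ring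
    _ ≤ r ^ n * r * ((n : ℝ) + 1) ^ ((3 : ℝ) / 2) := by gcongr

/-- There is a constant `C > 0` such that for all `h`,
`∑_{k=0}^{h} (h choose k) * S k ≤ C * (4 + √8)^(h+1) / (h+1)^(3/2)`,
where `S` is the sequence of super Catalan (little Schröder) numbers, defined by
`S 0 = 1` and `S (n+1) + S n = 2 * ∑_{i=0}^{n} S i * S (n-i)`. -/
theorem superCatalan_binomial_sum_bound (S : ℕ → ℕ) (hS0 : S 0 = 1)
    (hSrec : ∀ n, S (n + 1) + S n = 2 * ∑ i ∈ Finset.range (n + 1), S i * S (n - i)) :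
    ∃ C : ℝ, 0 < C ∧ ∀ h : ℕ,
      (∑ k ∈ Finset.range (h + 1), (h.choose k * S k : ℝ)) ≤
        C * (4 + Real.sqrt 8) ^ (h + 1) / ((h : ℝ) + 1) ^ ((3 : ℝ) / 2) := by
  have h8 : √8 ^ 2 = 8 := Real.sq_sqrt (by norm_num)
  have h8le : √8 ≤ 4 := by nlinarith [Real.sqrt_nonneg 8]
  have hT := binomialTransform_le_sum_catalan (f := fun k => (S k : ℝ)) (by simp [hS0])
    (fun n => by exact_mod_cast hSrec n) (a := (4 + √8) / 4) (b := (4 - √8) / 4)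
    (by ring) (by nlinarith) (by linarith) (by linarith [Real.sqrt_nonneg 8])
  refine ⟨1 / 2, by norm_num, fun h => ?_⟩
  have hgeom := sum_range_le_two_mul_of_two_mul_le_succ (by positivity)
    (two_mul_pow_div_rpow_le (r := 4 + √8) (by linarith)) h
  calc ∑ k ∈ range (h + 1), (h.choose k * S k : ℝ)
      = binomialTransform (fun k => (S k : ℝ)) h := rfl
    _ ≤ ∑ n ∈ range (h + 1), catalan n * ((4 + √8) / 4) ^ (n + 1) := hT h
    _ ≤ ∑ n ∈ range (h + 1),
          (4 + √8) / 4 * ((4 + √8) ^ n / ((n : ℝ) + 1) ^ ((3 : ℝ) / 2)) := by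
        refine sum_le_sum fun n _ => ?_
        calc (catalan n : ℝ) * ((4 + √8) / 4) ^ (n + 1)
            ≤ 4 ^ n / ((n : ℝ) + 1) ^ ((3 : ℝ) / 2) * ((4 + √8) / 4) ^ (n + 1) := by
              gcongr; exact catalan_le_four_pow_div_rpow n
          _ = _ := by rw [div_pow]; field_simp; ring
    _ ≤ (4 + √8) / 4 * (2 * ((4 + √8) ^ h / ((h : ℝ) + 1) ^ ((3 : ℝ) / 2))) := by
        rw [← mul_sum]; gcongr
    _ = _ := by ring
end

section
/- There exists a constant C > 0 such that for all natural numbers h ≥ 1, the sum ∑_{k=0}^{h} (h choose k) · catalan k is at most C · 5^h / h^{3/2}. -/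
/-!
Squaring the Catalan asymptotics gives `catalan k ^ 2 ≤ 2 · 16 ^ k / ((k + 1) ^ 2 (k + 2))`, so
`(h choose k) · catalan k` is at most the geometric mean of `(h choose k) 4 ^ k / (k + 1)` and
`(h choose k) 4 ^ k / ((k + 1) (k + 2))`, up to a constant. By Cauchy–Schwarz the sum is then bounded by
the geometric mean of the two weighted sums, which are the once and twice integrated binomial
expansions of `(1 + x) ^ h` at `x = 4`, hence `O(5 ^ h / h)` and `O(5 ^ h / h ^ 2)`.
-/

open Finset

theorem Nat.centralBinom_sq_mul_le (n : ℕ) : n.centralBinom ^ 2 * (3 * n + 1) ≤ 16 ^ n := by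
  induction n with
  | zero => simp
  | succ n ih =>
    have hpoly : (2 * (2 * n + 1)) ^ 2 * (3 * (n + 1) + 1) ≤ 16 * ((n + 1) ^ 2 * (3 * n + 1)) := by
      nlinarith
    refine Nat.le_of_mul_le_mul_left ?_ (by positivity : 0 < (n + 1) ^ 2 * (3 * n + 1))
    calc (n + 1) ^ 2 * (3 * n + 1) * ((n + 1).centralBinom ^ 2 * (3 * (n + 1) + 1))
        = ((n + 1) * (n + 1).centralBinom) ^ 2 * (3 * (n + 1) + 1) * (3 * n + 1) := by ring
      _ = (2 * (2 * n + 1)) ^ 2 * (3 * (n + 1) + 1) * (n.centralBinom ^ 2 * (3 * n + 1)) := by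
          rw [succ_mul_centralBinom_succ]; ring
      _ ≤ (2 * (2 * n + 1)) ^ 2 * (3 * (n + 1) + 1) * 16 ^ n := by gcongr
      _ ≤ 16 * ((n + 1) ^ 2 * (3 * n + 1)) * 16 ^ n := by gcongr
      _ = (n + 1) ^ 2 * (3 * n + 1) * 16 ^ (n + 1) := by ring

theorem catalan_sq_le (n : ℕ) : (catalan n : ℝ) ^ 2 ≤ 2 * 16 ^ n / ((n + 1) ^ 2 * (n + 2)) := by
  have hcb : ((n + 1 : ℝ) * catalan n) ^ 2 * (3 * n + 1) ≤ 16 ^ n := by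
    exact_mod_cast succ_mul_catalan_eq_centralBinom n ▸ n.centralBinom_sq_mul_le
  rw [le_div_iff₀ (by positivity)]
  nlinarith [sq_nonneg ((n + 1 : ℝ) * catalan n), (n.cast_nonneg : (0 : ℝ) ≤ n)]

section BinomialSums

variable {K : Type*} [Field K] [LinearOrder K] [IsStrictOrderedRing K] {x : K}

theorem Nat.cast_choose_div_succ (n k : ℕ) :
    (n.choose k : K) / (k + 1) = (n + 1).choose (k + 1) / (n + 1) := by
  rw [div_eq_div_iff (by positivity) (by positivity)]
  exact_mod_cast (mul_comm _ _).trans (Nat.add_one_mul_choose_eq n k)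

theorem sum_range_choose_add_mul_pow_add_le (hx : 0 ≤ x) (n m : ℕ) :
    ∑ k ∈ range (n + 1), ((n + m).choose (k + m) : K) * x ^ (k + m) ≤ (1 + x) ^ (n + m) := by
  have hbinom : (1 + x) ^ (n + m) = ∑ j ∈ range (m + (n + 1)), ((n + m).choose j : K) * x ^ j := by
    rw [add_comm 1 x, add_pow, show m + (n + 1) = n + m + 1 by ring]
    simp only [one_pow, mul_one, mul_comm]
  rw [hbinom, sum_range_add _ m (n + 1)]
  simp only [add_comm m]
  exact le_add_of_nonneg_left (sum_nonneg fun j _ => by positivity)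

theorem sum_range_choose_mul_pow_succ_div_le (hx : 0 ≤ x) (n : ℕ) :
    ∑ k ∈ range (n + 1), (n.choose k : K) * x ^ (k + 1) / (k + 1) ≤ (1 + x) ^ (n + 1) / (n + 1) := by
  calc ∑ k ∈ range (n + 1), (n.choose k : K) * x ^ (k + 1) / (k + 1)
      = (∑ k ∈ range (n + 1), ((n + 1).choose (k + 1) : K) * x ^ (k + 1)) / (n + 1) := by
        rw [sum_div]
        refine sum_congr rfl fun k _ => ?_
        rw [mul_div_right_comm, Nat.cast_choose_div_succ, div_mul_eq_mul_div]
    _ ≤ (1 + x) ^ (n + 1) / (n + 1) := by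
        gcongr
        exact sum_range_choose_add_mul_pow_add_le hx n 1

theorem sum_range_choose_mul_pow_add_two_div_le (hx : 0 ≤ x) (n : ℕ) :
    ∑ k ∈ range (n + 1), (n.choose k : K) * x ^ (k + 2) / ((k + 1) * (k + 2)) ≤
      (1 + x) ^ (n + 2) / ((n + 1) * (n + 2)) := by
  have hchoose (k : ℕ) : (n.choose k : K) / ((k + 1) * (k + 2)) =
      (n + 2).choose (k + 2) / ((n + 1) * (n + 2)) := by
    calc (n.choose k : K) / ((k + 1) * (k + 2))
        = (n + 1).choose (k + 1) / (k + 2) / (n + 1) := by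
          rw [← div_div, Nat.cast_choose_div_succ, div_right_comm]
      _ = (n + 2).choose (k + 2) / (n + 2) / (n + 1) := by
          congr 1
          exact_mod_cast Nat.cast_choose_div_succ (K := K) (n + 1) (k + 1)
      _ = (n + 2).choose (k + 2) / ((n + 1) * (n + 2)) := by
          rw [div_div, mul_comm]
  calc ∑ k ∈ range (n + 1), (n.choose k : K) * x ^ (k + 2) / ((k + 1) * (k + 2))
      = (∑ k ∈ range (n + 1), ((n + 2).choose (k + 2) : K) * x ^ (k + 2)) / ((n + 1) * (n + 2)) := by
        rw [sum_div]
        refine sum_congr rfl fun k _ => ?_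
        rw [mul_div_right_comm, hchoose, div_mul_eq_mul_div]
    _ ≤ (1 + x) ^ (n + 2) / ((n + 1) * (n + 2)) := by
        gcongr
        exact sum_range_choose_add_mul_pow_add_le hx n 2

end BinomialSums

theorem choose_mul_catalan_sq_le (n k : ℕ) :
    ((n.choose k : ℝ) * catalan k) ^ 2 ≤
      (n.choose k * 4 ^ (k + 1) / (k + 1)) * (n.choose k * 4 ^ (k + 2) / ((k + 1) * (k + 2)) / 32) :=
  calc ((n.choose k : ℝ) * catalan k) ^ 2
      = (n.choose k : ℝ) ^ 2 * (catalan k : ℝ) ^ 2 := mul_pow _ _ _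
    _ ≤ (n.choose k : ℝ) ^ 2 * (2 * 16 ^ k / ((k + 1) ^ 2 * (k + 2))) := by
        gcongr; exact catalan_sq_le k
    _ = _ := by
        rw [show (16 : ℝ) ^ k = 4 ^ k * 4 ^ k by rw [← mul_pow]; norm_num]
        field_simp
        ring

theorem sq_sum_choose_mul_catalan_le (h : ℕ) :
    (∑ k ∈ range (h + 1), (h.choose k * catalan k : ℝ)) ^ 2 ≤
      125 * (5 ^ h) ^ 2 / (32 * (((h : ℝ) + 1) ^ 2 * (h + 2))) :=
  calc (∑ k ∈ range (h + 1), (h.choose k * catalan k : ℝ)) ^ 2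
      ≤ (∑ k ∈ range (h + 1), (h.choose k : ℝ) * 4 ^ (k + 1) / (k + 1)) *
          ∑ k ∈ range (h + 1), (h.choose k : ℝ) * 4 ^ (k + 2) / ((k + 1) * (k + 2)) / 32 :=
        sum_sq_le_sum_mul_sum_of_sq_le_mul _ (fun _ _ => by positivity)
          (fun _ _ => by positivity) fun k _ => choose_mul_catalan_sq_le h k
    _ ≤ 5 ^ (h + 1) / (h + 1) * (5 ^ (h + 2) / ((h + 1) * (h + 2)) / 32) := by
        have h₁ := sum_range_choose_mul_pow_succ_div_le (x := (4 : ℝ)) (by norm_num) h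
        have h₂ := sum_range_choose_mul_pow_add_two_div_le (x := (4 : ℝ)) (by norm_num) h
        norm_num at h₁ h₂
        rw [← sum_div]
        gcongr
    _ = 125 * (5 ^ h) ^ 2 / (32 * (((h : ℝ) + 1) ^ 2 * (h + 2))) := by
        field_simp
        ring

/-- There is a constant `C > 0` such that for all `h ≥ 1`,
`∑_{k=0}^{h} (h choose k) * catalan k ≤ C * 5^h / h^(3/2)`. -/
theorem catalan_binomial_sum_bound :
    ∃ C : ℝ, 0 < C ∧ ∀ h : ℕ, 1 ≤ h →
      (∑ k ∈ Finset.range (h + 1), (h.choose k * catalan k : ℝ)) ≤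
        C * 5 ^ h / (h : ℝ) ^ ((3 : ℝ) / 2) := by
  refine ⟨2, two_pos, fun h hh => ?_⟩
  have hpos : (0 : ℝ) < h := by exact_mod_cast hh
  have hcube : (h : ℝ) ^ 3 ≤ (h + 1) ^ 2 * (h + 2) := by nlinarith
  have hsq : ((h : ℝ) ^ ((3 : ℝ) / 2)) ^ 2 = (h : ℝ) ^ 3 := by
    rw [← Real.rpow_mul_natCast hpos.le, ← Real.rpow_natCast]
    norm_num
  refine le_of_pow_le_pow_left₀ two_ne_zero (by positivity) ?_
  calc (∑ k ∈ range (h + 1), (h.choose k * catalan k : ℝ)) ^ 2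
      ≤ 125 * (5 ^ h) ^ 2 / (32 * (((h : ℝ) + 1) ^ 2 * (h + 2))) := sq_sum_choose_mul_catalan_le h
    _ ≤ 4 * (5 ^ h) ^ 2 / (h : ℝ) ^ 3 := by
        rw [div_le_div_iff₀ (by positivity) (by positivity)]
        have hp : 0 ≤ ((5 : ℝ) ^ h) ^ 2 * (h : ℝ) ^ 3 := by positivity
        nlinarith [mul_le_mul_of_nonneg_left hcube (sq_nonneg ((5 : ℝ) ^ h))]
    _ = (2 * 5 ^ h / (h : ℝ) ^ ((3 : ℝ) / 2)) ^ 2 := by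
        rw [div_pow, hsq]
        ring
end

section
/- Define T : ℕ → ℚ by T 0 = 0 and T n = ∑_{k=0}^{n-1} (n-1 choose k) · S k for n ≥ 1, where S is the sequence of super Catalan (little Schröder) numbers, and let A = ∑_{n≥0} T n · X^n in ℚ⟦X⟧. Then ((4 - 4·X) · A - 1)^2 = 8·X^2 - 8·X + 1 in ℚ⟦X⟧. -/
/-!
With `u = X / (1 - X)` the binomial transform becomes a substitution: `A = (X * s)(u)` where
`s = ∑ S n * X ^ n`, since `u ^ (k + 1) = ∑ₙ (n choose k) X ^ (n + 1)`. The recurrence says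
`s + X * s = 1 + 2 * X * s ^ 2`; substituting `u` and multiplying by `u` gives
`A + u * A = u + 2 * A ^ 2`, and clearing the denominator `1 - X` yields
`A = X + 2 * (1 - X) * A ^ 2`, which is the claimed identity after completing the square.
-/

namespace PowerSeries

open Finset

variable {R : Type*} [CommRing R]

theorem coeff_subst_eq_sum_range {a : R⟦X⟧} (ha : constantCoeff a = 0) (f : R⟦X⟧) (n : ℕ) :
    coeff n (f.subst a) = ∑ d ∈ range (n + 1), coeff d f * coeff n (a ^ d) := by
  rw [coeff_subst' (HasSubst.of_constantCoeff_zero' ha)]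
  refine finsum_eq_sum_of_support_subset _ fun d hd => ?_
  by_contra hdn
  refine hd (smul_eq_zero_of_right _ (coeff_of_lt_order _ ?_))
  calc (n : ℕ∞) < d := by simp_all
    _ ≤ (a ^ d).order := le_order_pow_of_constantCoeff_eq_zero d ha

theorem coeff_succ_X_mul_mk_one_pow_succ (m k : ℕ) :
    coeff (m + 1) ((X * mk 1 : R⟦X⟧) ^ (k + 1)) = m.choose k := by
  rw [mul_pow, mk_one_pow_eq_mk_choose_add, coeff_X_pow_mul', coeff_mk]
  split_ifs with hkm
  · rw [show k + (m + 1 - (k + 1)) = m by omega]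
  · rw [Nat.choose_eq_zero_of_lt (by omega), Nat.cast_zero]

theorem X_mul_mk_subst_X_mul_mk_one (b : ℕ → R) :
    (X * mk b).subst (X * mk 1 : R⟦X⟧) =
      X * mk fun m => ∑ k ∈ range (m + 1), (m.choose k : R) * b k := by
  ext (_ | m)
  · rw [coeff_subst_eq_sum_range (by simp)]
    simp
  · rw [coeff_subst_eq_sum_range (by simp), sum_range_succ', coeff_zero_X_mul, zero_mul,
      add_zero, coeff_succ_X_mul, coeff_mk]
    refine sum_congr rfl fun k _ => ?_
    rw [coeff_succ_X_mul, coeff_mk, coeff_succ_X_mul_mk_one_pow_succ, mul_comm]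

theorem mk_add_X_mul_mk_eq_one_add_two_mul_X_mul_mk_sq (a : ℕ → R) (h0 : a 0 = 1)
    (hrec : ∀ n, a (n + 1) + a n = 2 * ∑ i ∈ range (n + 1), a i * a (n - i)) :
    mk a + X * mk a = 1 + 2 * X * mk a ^ 2 := by
  ext (_ | n)
  · simp [h0]
  · rw [show (2 : R⟦X⟧) * X * mk a ^ 2 = X * (C 2 * mk a ^ 2) by rw [map_ofNat]; ring,
      map_add, map_add, coeff_succ_X_mul, coeff_succ_X_mul, coeff_mk, coeff_mk, hrec, coeff_one,
      if_neg n.succ_ne_zero, zero_add, coeff_C_mul, sq, coeff_mul,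
      Nat.sum_antidiagonal_eq_sum_range_succ_mk]
    simp

end PowerSeries

open PowerSeries in
/-- Let `S` be the super Catalan (little Schröder) numbers, `T 0 = 0` and
`T n = ∑_{k=0}^{n-1} (n-1 choose k) * S k` for `n ≥ 1`, and `A = ∑ T n * X^n` in `ℚ⟦X⟧`.
Then `((4 - 4X) * A - 1)^2 = 8X^2 - 8X + 1`, i.e. `A = (1 - √(8x²-8x+1))/(4-4x)`. -/
theorem superCatalan_binomial_transform_gf (S : ℕ → ℕ) (hS0 : S 0 = 1)
    (hSrec : ∀ n, S (n + 1) + S n = 2 * ∑ i ∈ Finset.range (n + 1), S i * S (n - i))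
    (T : ℕ → ℚ) (hT0 : T 0 = 0)
    (hT : ∀ m : ℕ, T (m + 1) = ∑ k ∈ Finset.range (m + 1), (m.choose k : ℚ) * (S k : ℚ)) :
    ((4 - 4 * PowerSeries.X) * PowerSeries.mk T - 1) ^ 2 =
      8 * PowerSeries.X ^ 2 - 8 * PowerSeries.X + 1 := by
  set u : ℚ⟦X⟧ := X * mk 1
  have hu : HasSubst u := HasSubst.of_constantCoeff_zero' (by simp [u])
  have hu_mul : u * (1 - X) = X := by rw [mul_assoc, mk_one_mul_one_sub_eq_one, mul_one]
  have hA : mk T = substAlgHom hu (X * mk fun n => (S n : ℚ)) := by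
    rw [coe_substAlgHom, X_mul_mk_subst_X_mul_mk_one]
    ext (_ | m) <;> simp [hT0, hT]
  have hSchroder := congrArg (substAlgHom hu)
    (mk_add_X_mul_mk_eq_one_add_two_mul_X_mul_mk_sq (fun n => (S n : ℚ)) (by simp [hS0])
      (fun n => by exact_mod_cast hSrec n))
  simp only [map_add, map_mul, map_pow, map_one, map_ofNat, substAlgHom_X] at hA hSchroder
  have hquad : mk T + u * mk T = u + 2 * mk T ^ 2 := by
    rw [hA]
    linear_combination u * hSchroder
  linear_combination (-8 * (1 - X) ^ 2) * hquad + 8 * (1 - X) * (mk T - 1) * hu_mul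
end
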